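/- arXiv:1901.01399 — 7 statements merged into one kernel-verified Lean document; each statement's English description precedes it below -/
import Mathlib

section
/- Let α>0. Assume that F belongs to the generalized long-tailed class 𝒪ℒ, that Ḡ(x)>0 for all x≥0, that e^{λ₁x^α}·F̄(x)→∞ as x→∞ for some λ₁>0 and e^{λ₂x^α}·F̄(x)→0 as x→∞ for some λ₂>0, and that e^{λ₃x^α}·Ḡ(x)→0 as x→∞ for some λ₃>0. Then the product convolution H belongs to 𝒪ℒ. -/
open MeasureTheory ProbabilityTheory Filter Topology Asymptotics Set

noncomputable section

/-- The tail `P(X > x)` of a random variable `X` (as a real number). -/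
def rvTail {Ω : Type*} [MeasurableSpace Ω] (μ : Measure Ω) (X : Ω → ℝ) (x : ℝ) : ℝ :=
  (μ {ω | x < X ω}).toReal

/-- The tail `V̄(x) = V((x,∞))` of a distribution (probability measure) on `ℝ`. -/
def mTail (V : Measure ℝ) (x : ℝ) : ℝ := (V (Ioi x)).toReal

/-- The long-tailed class `ℒ`, described via the tail function:
`T̄(x) > 0` for all `x` and `T(x - t) ∼ T(x)` for each `t > 0`. -/
def IsLongTail (T : ℝ → ℝ) : Prop :=
  (∀ x, 0 < T x) ∧ ∀ t > 0, Tendsto (fun x => T (x - t) / T x) atTop (𝓝 1)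

/-- The exponential class `ℒ(γ)`, described via the tail function:
`T(x) > 0` for all `x` and `T(x - t) ∼ e^{γ t} T(x)` for each real `t`. -/
def IsLgamma (γ : ℝ) (T : ℝ → ℝ) : Prop :=
  (∀ x, 0 < T x) ∧ ∀ t : ℝ, Tendsto (fun x => T (x - t) / T x) atTop (𝓝 (Real.exp (γ * t)))

/-- The generalized long-tailed class `𝒪ℒ`, described via the tail function:
`T(x) > 0` for all `x` and `limsup_{x→∞} T(x - t)/T(x) < ∞` for each `t > 0`. -/
def IsOL (T : ℝ → ℝ) : Prop :=
  (∀ x, 0 < T x) ∧ ∀ t > 0, IsBoundedUnder (· ≤ ·) atTop (fun x => T (x - t) / T x)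

/-- `C^*(T, t) = limsup_{x→∞} T(x-t)/T(x)`. -/
def Cstar (T : ℝ → ℝ) (t : ℝ) : ℝ := Filter.limsup (fun x => T (x - t) / T x) atTop

/-- `C_*(T, t) = liminf_{x→∞} T(x-t)/T(x)`. -/
def Cflat (T : ℝ → ℝ) (t : ℝ) : ℝ := Filter.liminf (fun x => T (x - t) / T x) atTop

lemma tail_fubini {Ω : Type*} [MeasurableSpace Ω] (μ : Measure Ω) [IsProbabilityMeasure μ]
    (X Y : Ω → ℝ) (hXm : Measurable X) (hYm : Measurable Y)
    (hindep : IndepFun X Y μ) (g : ℝ → ℝ) (hg : Measurable g)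
    (A : Set ℝ) (hA : MeasurableSet A) :
    μ {ω | g (Y ω) < X ω ∧ Y ω ∈ A}
      = ∫⁻ y in A, μ {ω | g y < X ω} ∂(μ.map Y) := by
  have hmap : μ.map (fun ω => (Y ω, X ω)) = (μ.map Y).prod (μ.map X) :=
    (indepFun_iff_map_prod_eq_prod_map_map hYm.aemeasurable hXm.aemeasurable).mp hindep.symm
  set S : Set (ℝ × ℝ) := {p | g p.1 < p.2 ∧ p.1 ∈ A} with hS
  have hSm : MeasurableSet S := by
    apply MeasurableSet.inter
    · exact measurableSet_lt (hg.comp measurable_fst) measurable_snd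
    · exact measurable_fst hA
  have h1 : μ {ω | g (Y ω) < X ω ∧ Y ω ∈ A} = μ.map (fun ω => (Y ω, X ω)) S := by
    rw [Measure.map_apply (hYm.prodMk hXm) hSm]
    rfl
  rw [h1, hmap, Measure.prod_apply hSm]
  have h2 : (fun y => (μ.map X) (Prod.mk y ⁻¹' S))
      = A.indicator (fun y => (μ.map X) (Ioi (g y))) := by
    funext y
    by_cases hy : y ∈ A
    · have : Prod.mk y ⁻¹' S = Ioi (g y) := by
        ext z; simp [hS, hy]
      rw [this, Set.indicator_of_mem hy]
    · have : Prod.mk y ⁻¹' S = ∅ := by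
        ext z; simp [hS, hy]
      rw [this, Set.indicator_of_notMem hy]
      simp
  rw [h2]
  rw [show lintegral (Measure.map Y μ) (A.indicator fun y => (Measure.map X μ) (Ioi (g y)))
      = ∫⁻ y, A.indicator (fun y => (Measure.map X μ) (Ioi (g y))) y ∂(Measure.map Y μ) from rfl,
    lintegral_indicator hA]
  congr 1
  funext y
  rw [Measure.map_apply hXm measurableSet_Ioi]
  rfl

/-- independence lower bound: if the rectangle is included in the target event. -/
lemma indep_lower {Ω : Type*} [MeasurableSpace Ω] (μ : Measure Ω) [IsProbabilityMeasure μ]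
    (X Y : Ω → ℝ) (hindep : IndepFun X Y μ)
    (a b : ℝ) (T : Set Ω) (hsub : {ω | a < X ω} ∩ {ω | b < Y ω} ⊆ T) :
    μ {ω | a < X ω} * μ {ω | b < Y ω} ≤ μ T := by
  have := hindep.measure_inter_preimage_eq_mul (Ioi a) (Ioi b)
    measurableSet_Ioi measurableSet_Ioi
  calc μ {ω | a < X ω} * μ {ω | b < Y ω}
      = μ (X ⁻¹' Ioi a ∩ Y ⁻¹' Ioi b) := this.symm
    _ ≤ μ T := measure_mono hsub

/-- under the exponential-order conditions on the tails of `F` and `G`,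
if `F ∈ 𝒪ℒ` then the product convolution `H` belongs to `𝒪ℒ`. -/
theorem stmt_0 {Ω : Type*} [MeasurableSpace Ω] (μ : Measure Ω) [IsProbabilityMeasure μ]
    (X Y : Ω → ℝ) (hXm : Measurable X) (hYm : Measurable Y)
    (hXnn : ∀ ω, 0 ≤ X ω) (hYnn : ∀ ω, 0 ≤ Y ω)
    (hindep : IndepFun X Y μ)
    (α : ℝ) (hα : 0 < α)
    (hFOL : IsOL (rvTail μ X))
    (hGpos : ∀ x ≥ (0:ℝ), 0 < rvTail μ Y x)
    (h1 : ∃ l₁ > (0:ℝ), Tendsto (fun x => Real.exp (l₁ * x ^ α) * rvTail μ X x) atTop atTop)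
    (h2 : ∃ l₂ > (0:ℝ), Tendsto (fun x => Real.exp (l₂ * x ^ α) * rvTail μ X x) atTop (𝓝 0))
    (h3 : ∃ l₃ > (0:ℝ), Tendsto (fun x => Real.exp (l₃ * x ^ α) * rvTail μ Y x) atTop (𝓝 0)) :
    IsOL (rvTail μ (fun ω => X ω * Y ω)) := by
  obtain ⟨l₁, hl₁, H1⟩ := h1
  obtain ⟨l₂, hl₂, H2⟩ := h2
  clear h3
  -- basic facts
  have hfin : ∀ (T : Set Ω), μ T ≠ ⊤ := fun T => measure_ne_top μ T
  have hXne : ∀ u : ℝ, μ {ω | u < X ω} ≠ 0 := by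
    intro u hu
    have := hFOL.1 u
    simp only [rvTail, hu] at this
    simp at this
  have hYne1 : μ {ω | (1:ℝ) < Y ω} ≠ 0 := by
    intro hu
    have := hGpos 1 (by norm_num)
    simp only [rvTail, hu] at this
    simp at this
  set g1 : ℝ := rvTail μ Y 1 with hg1
  have hg1pos : 0 < g1 := hGpos 1 (by norm_num)
  -- positivity of H
  have hHlow : ∀ x : ℝ, 0 ≤ x → rvTail μ X x * g1 ≤ rvTail μ (fun ω => X ω * Y ω) x := by
    intro x hx
    have hsub : {ω | x < X ω} ∩ {ω | (1:ℝ) < Y ω} ⊆ {ω | x < X ω * Y ω} := by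
      rintro ω ⟨hXω, hYω⟩
      simp only [Set.mem_setOf_eq] at *
      nlinarith [hXnn ω]
    have := indep_lower μ X Y hindep x 1 _ hsub
    simp only [rvTail, hg1]
    rw [← ENNReal.toReal_mul]
    exact (ENNReal.toReal_le_toReal (ENNReal.mul_ne_top (hfin _) (hfin _)) (hfin _)).mpr this
  have hHpos : ∀ x : ℝ, 0 < rvTail μ (fun ω => X ω * Y ω) x := by
    intro x
    have h0 : 0 < rvTail μ X (max x 0) * g1 :=
      mul_pos (hFOL.1 _) hg1pos
    have hmono : rvTail μ (fun ω => X ω * Y ω) (max x 0) ≤ rvTail μ (fun ω => X ω * Y ω) x := by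
      apply ENNReal.toReal_le_toReal (hfin _) (hfin _) |>.mpr
      apply measure_mono
      intro ω hω
      simp only [Set.mem_setOf_eq] at *
      exact lt_of_le_of_lt (le_max_left x 0) hω
    exact lt_of_lt_of_le (lt_of_lt_of_le h0 (hHlow _ (le_max_right x 0))) hmono
  refine ⟨hHpos, ?_⟩
  intro t ht
  -- choose ε with l₂ / (2ε)^α = 2 l₁
  set ε : ℝ := ((l₂ / (2 * l₁)) ^ (α⁻¹)) / 2 with hεdef
  have hε : 0 < ε := by
    have : 0 < (l₂ / (2 * l₁)) ^ (α⁻¹) := Real.rpow_pos_of_pos (by positivity) _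
    positivity
  have h2ε : (2 * ε) ^ α = l₂ / (2 * l₁) := by
    have h2e : 2 * ε = (l₂ / (2 * l₁)) ^ (α⁻¹) := by rw [hεdef]; ring
    rw [h2e, Real.rpow_inv_rpow (by positivity) (ne_of_gt hα)]
  have hexp_ineq : ∀ x : ℝ, 2 * t ≤ x → 2 * l₁ * x ^ α ≤ l₂ * ((x - t) / ε) ^ α := by
    intro x hx
    have hx0 : (0:ℝ) ≤ x := le_trans (by linarith) hx
    have h1' : x / (2 * ε) ≤ (x - t) / ε := by
      rw [div_le_div_iff₀ (by positivity) hε]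
      nlinarith [mul_nonneg (by linarith : (0:ℝ) ≤ x - 2 * t) hε.le]
    have h0' : (0:ℝ) ≤ x / (2 * ε) := by positivity
    have hmono : (x / (2 * ε)) ^ α ≤ ((x - t) / ε) ^ α :=
      Real.rpow_le_rpow h0' h1' hα.le
    have hdiv : (x / (2 * ε)) ^ α = x ^ α / (l₂ / (2 * l₁)) := by
      rw [Real.div_rpow hx0 (by positivity), h2ε]
    have heq : 2 * l₁ * x ^ α = l₂ * (x / (2 * ε)) ^ α := by
      rw [hdiv]; field_simp
    rw [heq]
    exact mul_le_mul_of_nonneg_left hmono hl₂.le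
  set s : ℝ := t / ε with hsdef
  have hs : 0 < s := div_pos ht hε
  -- O-long-tail constant
  obtain ⟨C, hC⟩ := hFOL.2 s hs
  rw [eventually_map] at hC
  obtain ⟨x₀', hx₀'⟩ := eventually_atTop.mp hC
  set x₀ : ℝ := max x₀' 1 with hx₀def
  have hx₀1 : (1:ℝ) ≤ x₀ := le_max_right _ _
  have hx₀pos : (0:ℝ) < x₀ := lt_of_lt_of_le one_pos hx₀1
  have hCpos : 0 < C :=
    lt_of_lt_of_le (div_pos (hFOL.1 _) (hFOL.1 _)) (hx₀' x₀ (le_max_left _ _))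
  have hOL : ∀ u : ℝ, x₀ ≤ u → rvTail μ X (u - s) ≤ C * rvTail μ X u := by
    intro u hu
    exact (div_le_iff₀ (hFOL.1 u)).mp (hx₀' u (le_trans (le_max_left _ _) hu))
  have hOLe : ∀ u : ℝ, x₀ ≤ u →
      μ {ω | u - s < X ω} ≤ ENNReal.ofReal C * μ {ω | u < X ω} := by
    intro u hu
    have h := hOL u hu
    have e1 : μ {ω | u - s < X ω} = ENNReal.ofReal (rvTail μ X (u - s)) :=
      (ENNReal.ofReal_toReal (hfin _)).symm
    have e2 : μ {ω | u < X ω} = ENNReal.ofReal (rvTail μ X u) :=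
      (ENNReal.ofReal_toReal (hfin _)).symm
    rw [e1, e2, ← ENNReal.ofReal_mul hCpos.le]
    exact ENNReal.ofReal_le_ofReal h
  -- eventual tail bounds
  have hLB : ∀ᶠ x : ℝ in atTop, Real.exp (-(l₁ * x ^ α)) ≤ rvTail μ X x := by
    filter_upwards [H1.eventually_ge_atTop 1] with x hx
    have hpos := Real.exp_pos (l₁ * x ^ α)
    rw [Real.exp_neg, inv_eq_one_div, div_le_iff₀ hpos]
    linarith [hx, mul_comm (Real.exp (l₁ * x ^ α)) (rvTail μ X x)]
  have hUB : ∀ᶠ u : ℝ in atTop, rvTail μ X u ≤ g1 * Real.exp (-(l₂ * u ^ α)) := by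
    filter_upwards [H2.eventually_lt_const hg1pos] with u hu
    have hpos := Real.exp_pos (l₂ * u ^ α)
    rw [Real.exp_neg, ← div_eq_mul_inv, le_div_iff₀ hpos]
    linarith [hu, mul_comm (Real.exp (l₂ * u ^ α)) (rvTail μ X u)]
  have htendε : Tendsto (fun x : ℝ => (x - t) / ε) atTop atTop := by
    apply Tendsto.atTop_div_const hε
    simpa [sub_eq_add_neg] using tendsto_atTop_add_const_right atTop (-t) tendsto_id
  have key : ∀ᶠ x : ℝ in atTop,
      rvTail μ (fun ω => X ω * Y ω) (x - t) / rvTail μ (fun ω => X ω * Y ω) x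
        ≤ 1 + C + (rvTail μ X x₀)⁻¹ := by
    filter_upwards [eventually_ge_atTop (2 * t), eventually_gt_atTop (0:ℝ),
      htendε.eventually hUB, hLB] with x hx2t hxpos hxUB hxLB
    -- ennreal splitting
    have hsplit : μ {ω | x - t < X ω * Y ω}
        ≤ μ {ω | (x - t) / ε < X ω}
          + (μ {ω | x / Y ω - s < X ω ∧ Y ω ∈ Ioc ε (x / x₀)} + μ {ω | x / x₀ < Y ω}) := by
      have hsub : {ω | x - t < X ω * Y ω}
          ⊆ {ω | (x - t) / ε < X ω} ∪ ({ω | x / Y ω - s < X ω ∧ Y ω ∈ Ioc ε (x / x₀)}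
            ∪ {ω | x / x₀ < Y ω}) := by
        intro ω hω
        simp only [Set.mem_setOf_eq, Set.mem_union, Set.mem_Ioc] at *
        by_cases hYε : Y ω ≤ ε
        · left
          rw [div_lt_iff₀ hε]
          calc x - t < X ω * Y ω := hω
            _ ≤ X ω * ε := mul_le_mul_of_nonneg_left hYε (hXnn ω)
        · right
          push_neg at hYε
          by_cases hYx : Y ω ≤ x / x₀
          · left
            refine ⟨?_, hYε, hYx⟩
            have hYpos : 0 < Y ω := lt_trans hε hYε
            have h1' : (x - t) / Y ω < X ω := by
              rw [div_lt_iff₀ hYpos]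
              linarith [mul_comm (X ω) (Y ω)]
            have h2' : x / Y ω - s ≤ (x - t) / Y ω := by
              rw [sub_div]
              have : t / Y ω ≤ t / ε := by
                apply div_le_div_of_nonneg_left ht.le hε hYε.le
              have hss : s = t / ε := rfl
              linarith
            linarith
          · right
            push_neg at hYx
            exact hYx
      calc μ {ω | x - t < X ω * Y ω}
          ≤ μ ({ω | (x - t) / ε < X ω} ∪ ({ω | x / Y ω - s < X ω ∧ Y ω ∈ Ioc ε (x / x₀)}
            ∪ {ω | x / x₀ < Y ω})) := measure_mono hsub
        _ ≤ _ := le_trans (measure_union_le _ _) (by gcongr; exact measure_union_le _ _)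
    -- middle term bound
    have hT2 : μ {ω | x / Y ω - s < X ω ∧ Y ω ∈ Ioc ε (x / x₀)}
        ≤ ENNReal.ofReal C * μ {ω | x < X ω * Y ω} := by
      have hg1m : Measurable (fun y : ℝ => x / y - s) :=
        (measurable_const.div measurable_id).sub measurable_const
      have hg2m : Measurable (fun y : ℝ => x / y) := measurable_const.div measurable_id
      rw [tail_fubini μ X Y hXm hYm hindep _ hg1m _ measurableSet_Ioc]
      have step1 : ∫⁻ y in Ioc ε (x / x₀), μ {ω | x / y - s < X ω} ∂(μ.map Y)
          ≤ ∫⁻ y in Ioc ε (x / x₀), ENNReal.ofReal C * μ {ω | x / y < X ω} ∂(μ.map Y) := by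
        apply lintegral_mono_ae
        filter_upwards [ae_restrict_mem measurableSet_Ioc] with y hy
        have hypos : 0 < y := lt_trans hε hy.1
        have hxy : x₀ ≤ x / y := by
          rw [le_div_iff₀ hypos]
          have := (le_div_iff₀ hx₀pos).mp hy.2
          linarith [mul_comm x₀ y]
        exact hOLe (x / y) hxy
      have step2 : ∫⁻ y in Ioc ε (x / x₀), ENNReal.ofReal C * μ {ω | x / y < X ω} ∂(μ.map Y)
          = ENNReal.ofReal C * ∫⁻ y in Ioc ε (x / x₀), μ {ω | x / y < X ω} ∂(μ.map Y) :=
        lintegral_const_mul' _ _ ENNReal.ofReal_ne_top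
      have step3 : ∫⁻ y in Ioc ε (x / x₀), μ {ω | x / y < X ω} ∂(μ.map Y)
          = μ {ω | x / Y ω < X ω ∧ Y ω ∈ Ioc ε (x / x₀)} :=
        (tail_fubini μ X Y hXm hYm hindep _ hg2m _ measurableSet_Ioc).symm
      have step4 : μ {ω | x / Y ω < X ω ∧ Y ω ∈ Ioc ε (x / x₀)} ≤ μ {ω | x < X ω * Y ω} := by
        apply measure_mono
        intro ω hω
        obtain ⟨h1', h2'⟩ := hω
        simp only [Set.mem_Ioc] at h2'
        simp only [Set.mem_setOf_eq]
        have hYpos : 0 < Y ω := lt_trans hε h2'.1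
        rw [div_lt_iff₀ hYpos] at h1'
        linarith [mul_comm (X ω) (Y ω)]
      calc ∫⁻ y in Ioc ε (x / x₀), μ {ω | x / y - s < X ω} ∂(μ.map Y)
          ≤ ENNReal.ofReal C * μ {ω | x / Y ω < X ω ∧ Y ω ∈ Ioc ε (x / x₀)} := by
            rw [← step3]; exact le_trans step1 (le_of_eq step2)
        _ ≤ ENNReal.ofReal C * μ {ω | x < X ω * Y ω} := mul_le_mul_right step4 _
    -- last term bound (real)
    have hT3 : rvTail μ Y (x / x₀) * rvTail μ X x₀ ≤ rvTail μ (fun ω => X ω * Y ω) x := by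
      have hsub : {ω | x₀ < X ω} ∩ {ω | x / x₀ < Y ω} ⊆ {ω | x < X ω * Y ω} := by
        rintro ω ⟨hXω, hYω⟩
        simp only [Set.mem_setOf_eq] at *
        have hxx : x₀ * (x / x₀) = x := by field_simp
        nlinarith [mul_pos (sub_pos.mpr hXω) (lt_trans (div_pos hxpos hx₀pos) hYω),
          mul_nonneg (sub_pos.mpr hXω).le (div_pos hxpos hx₀pos).le]
      have := indep_lower μ X Y hindep x₀ (x / x₀) _ hsub
      simp only [rvTail]
      rw [mul_comm, ← ENNReal.toReal_mul]
      exact (ENNReal.toReal_le_toReal (ENNReal.mul_ne_top (hfin _) (hfin _)) (hfin _)).mpr this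
    -- convert the splitting to reals
    have hreal : rvTail μ (fun ω => X ω * Y ω) (x - t)
        ≤ rvTail μ X ((x - t) / ε)
          + (C * rvTail μ (fun ω => X ω * Y ω) x + rvTail μ Y (x / x₀)) := by
      have hbig : μ {ω | x - t < X ω * Y ω}
          ≤ μ {ω | (x - t) / ε < X ω}
            + (ENNReal.ofReal C * μ {ω | x < X ω * Y ω} + μ {ω | x / x₀ < Y ω}) := by
        refine le_trans hsplit ?_
        gcongr
      have hne : μ {ω | (x - t) / ε < X ω}
          + (ENNReal.ofReal C * μ {ω | x < X ω * Y ω} + μ {ω | x / x₀ < Y ω}) ≠ ⊤ := by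
        apply ENNReal.add_ne_top.mpr
        refine ⟨hfin _, ENNReal.add_ne_top.mpr ⟨ENNReal.mul_ne_top ENNReal.ofReal_ne_top (hfin _), hfin _⟩⟩
      have := (ENNReal.toReal_le_toReal (hfin _) hne).mpr hbig
      simp only [rvTail]
      rw [ENNReal.toReal_add (hfin _) (ENNReal.add_ne_top.mpr
          ⟨ENNReal.mul_ne_top ENNReal.ofReal_ne_top (hfin _), hfin _⟩),
        ENNReal.toReal_add (ENNReal.mul_ne_top ENNReal.ofReal_ne_top (hfin _)) (hfin _),
        ENNReal.toReal_mul, ENNReal.toReal_ofReal hCpos.le] at this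
      exact this
    -- first term ≤ Hx
    have hA1 : rvTail μ X ((x - t) / ε) ≤ rvTail μ (fun ω => X ω * Y ω) x := by
      have e1 : Real.exp (-(l₂ * ((x - t) / ε) ^ α)) ≤ Real.exp (-(2 * l₁ * x ^ α)) := by
        apply Real.exp_le_exp.mpr
        have := hexp_ineq x hx2t
        linarith
      have e2 : Real.exp (-(2 * l₁ * x ^ α)) ≤ Real.exp (-(l₁ * x ^ α)) := by
        apply Real.exp_le_exp.mpr
        have hxa : (0:ℝ) ≤ x ^ α := Real.rpow_nonneg hxpos.le α
        nlinarith
      calc rvTail μ X ((x - t) / ε) ≤ g1 * Real.exp (-(l₂ * ((x - t) / ε) ^ α)) := hxUB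
        _ ≤ g1 * Real.exp (-(l₁ * x ^ α)) := by
            apply mul_le_mul_of_nonneg_left (le_trans e1 e2) hg1pos.le
        _ = Real.exp (-(l₁ * x ^ α)) * g1 := by ring
        _ ≤ rvTail μ X x * g1 := mul_le_mul_of_nonneg_right hxLB hg1pos.le
        _ ≤ rvTail μ (fun ω => X ω * Y ω) x := hHlow x hxpos.le
    -- last term ≤ (F x₀)⁻¹ * Hx
    have hA3 : rvTail μ Y (x / x₀) ≤ (rvTail μ X x₀)⁻¹ * rvTail μ (fun ω => X ω * Y ω) x := by
      rw [inv_mul_eq_div, le_div_iff₀ (hFOL.1 x₀)]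
      exact hT3
    rw [div_le_iff₀ (hHpos x)]
    have hexpand : (1 + C + (rvTail μ X x₀)⁻¹) * rvTail μ (fun ω => X ω * Y ω) x
        = rvTail μ (fun ω => X ω * Y ω) x + C * rvTail μ (fun ω => X ω * Y ω) x
          + (rvTail μ X x₀)⁻¹ * rvTail μ (fun ω => X ω * Y ω) x := by ring
    rw [hexpand]
    linarith
  exact ⟨1 + C + (rvTail μ X x₀)⁻¹, eventually_map.mpr key⟩
end
end

section
/- Let α>0. Assume that F belongs to the generalized long-tailed class 𝒪ℒ, that Ḡ(x)>0 for all x≥0, that e^{λ₁x^α}·F̄(x)→∞ as x→∞ for some λ₁>0 and e^{λ₂x^α}·F̄(x)→0 as x→∞ for some λ₂>0, and that e^{λ₃x^α}·Ḡ(x)→0 as x→∞ for some λ₃>0. If moreover C^*(F,0)=1, then the product convolution H belongs to the long-tailed class ℒ. -/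
open MeasureTheory ProbabilityTheory Filter Topology Asymptotics Set
open scoped ENNReal

noncomputable section

/-- under the exponential-order conditions, if `F ∈ 𝒪ℒ` and
`C^*(F,0) = lim_{t→0+} C^*(F,t) = 1`, then the product convolution `H` is long-tailed. -/
theorem stmt_1 {Ω : Type*} [MeasurableSpace Ω] (μ : Measure Ω) [IsProbabilityMeasure μ]
    (X Y : Ω → ℝ) (hXm : Measurable X) (hYm : Measurable Y)
    (hXnn : ∀ ω, 0 ≤ X ω) (hYnn : ∀ ω, 0 ≤ Y ω)
    (hindep : IndepFun X Y μ)
    (α : ℝ) (hα : 0 < α)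
    (hFOL : IsOL (rvTail μ X))
    (hGpos : ∀ x ≥ (0:ℝ), 0 < rvTail μ Y x)
    (h1 : ∃ l₁ > (0:ℝ), Tendsto (fun x => Real.exp (l₁ * x ^ α) * rvTail μ X x) atTop atTop)
    (h2 : ∃ l₂ > (0:ℝ), Tendsto (fun x => Real.exp (l₂ * x ^ α) * rvTail μ X x) atTop (𝓝 0))
    (h3 : ∃ l₃ > (0:ℝ), Tendsto (fun x => Real.exp (l₃ * x ^ α) * rvTail μ Y x) atTop (𝓝 0))
    (hC : Tendsto (fun t => Cstar (rvTail μ X) t) (𝓝[>] (0:ℝ)) (𝓝 1)) :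
    IsLongTail (rvTail μ (fun ω => X ω * Y ω)) := by
  classical
  obtain ⟨l₁, hl₁, h1⟩ := h1
  obtain ⟨l₂, hl₂, h2⟩ := h2
  obtain ⟨l₃, hl₃, h3⟩ := h3
  set F := rvTail μ X with hFdef
  set G := rvTail μ Y with hGdef
  set ν := μ.map X with hνdef
  set ρ := μ.map Y with hρdef
  haveI : IsProbabilityMeasure ν := Measure.isProbabilityMeasure_map hXm.aemeasurable
  haveI : IsProbabilityMeasure ρ := Measure.isProbabilityMeasure_map hYm.aemeasurable
  have hFpos : ∀ s, 0 < F s := hFOL.1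
  have hFnn : ∀ s, 0 ≤ F s := fun s => (hFpos s).le
  have hXpre : ∀ s : ℝ, μ (X ⁻¹' Ioi s) = ENNReal.ofReal (F s) := fun s =>
    (ENNReal.ofReal_toReal (measure_ne_top μ _)).symm
  have hYpre : ∀ s : ℝ, μ (Y ⁻¹' Ioi s) = ENNReal.ofReal (G s) := fun s =>
    (ENNReal.ofReal_toReal (measure_ne_top μ _)).symm
  have hν : ∀ s : ℝ, ν (Ioi s) = ENNReal.ofReal (F s) := by
    intro s
    rw [hνdef, Measure.map_apply hXm measurableSet_Ioi]
    exact hXpre s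
  have hρ : ∀ s : ℝ, ρ (Ioi s) = ENNReal.ofReal (G s) := by
    intro s
    rw [hρdef, Measure.map_apply hYm measurableSet_Ioi]
    exact hYpre s
  have hSm : ∀ x : ℝ, MeasurableSet {p : ℝ × ℝ | x < p.2 * p.1} := fun x =>
    measurableSet_lt measurable_const (measurable_snd.mul measurable_fst)
  have hprod : μ.map (fun ω => (Y ω, X ω)) = ρ.prod ν :=
    (indepFun_iff_map_prod_eq_prod_map_map hYm.aemeasurable hXm.aemeasurable).mp hindep.symm
  set P : ℝ → ℝ≥0∞ := fun x => (ρ.prod ν) {p : ℝ × ℝ | x < p.2 * p.1} with hPdef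
  have hPeq : ∀ x, μ {ω | x < X ω * Y ω} = P x := by
    intro x
    show μ {ω | x < X ω * Y ω} = (ρ.prod ν) {p : ℝ × ℝ | x < p.2 * p.1}
    rw [← hprod, Measure.map_apply (hYm.prodMk hXm) (hSm x)]
    rfl
  have hHP : ∀ x, rvTail μ (fun ω => X ω * Y ω) x = (P x).toReal := by
    intro x
    rw [rvTail, hPeq x]
  have hPtop : ∀ x, P x ≠ ⊤ := fun x => measure_ne_top _ _
  have hPpos : ∀ x, 0 < P x := by
    intro x
    rw [← hPeq x]
    have hsub : (X ⁻¹' Ioi (max x 1)) ∩ (Y ⁻¹' Ioi 1) ⊆ {ω | x < X ω * Y ω} := by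
      rintro ω ⟨hx1, hy1⟩
      simp only [mem_preimage, mem_Ioi] at hx1 hy1
      have h0 : (0:ℝ) ≤ max x 1 := le_trans zero_le_one (le_max_right _ _)
      have : x ≤ max x 1 * 1 := by rw [mul_one]; exact le_max_left _ _
      exact lt_of_le_of_lt this (mul_lt_mul'' hx1 hy1 h0 zero_le_one)
    have hmul : μ ((X ⁻¹' Ioi (max x 1)) ∩ (Y ⁻¹' Ioi 1)) =
        μ (X ⁻¹' Ioi (max x 1)) * μ (Y ⁻¹' Ioi 1) :=
      hindep.measure_inter_preimage_eq_mul _ _ measurableSet_Ioi measurableSet_Ioi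
    have hX0 : 0 < μ (X ⁻¹' Ioi (max x 1)) := by
      rw [hXpre]; exact ENNReal.ofReal_pos.mpr (hFpos _)
    have hY0 : 0 < μ (Y ⁻¹' Ioi 1) := by
      rw [hYpre]; exact ENNReal.ofReal_pos.mpr (hGpos 1 zero_le_one)
    calc (0:ℝ≥0∞) < μ (X ⁻¹' Ioi (max x 1)) * μ (Y ⁻¹' Ioi 1) :=
          ENNReal.mul_pos hX0.ne' hY0.ne'
      _ = μ ((X ⁻¹' Ioi (max x 1)) ∩ (Y ⁻¹' Ioi 1)) := hmul.symm
      _ ≤ μ {ω | x < X ω * Y ω} := measure_mono hsub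
  have hPanti : ∀ {x y : ℝ}, x ≤ y → P y ≤ P x := by
    intro x y hxy
    exact measure_mono (fun p hp => lt_of_le_of_lt (by linarith : x ≤ y) hp)
  constructor
  · intro x
    rw [hHP]
    exact ENNReal.toReal_pos (hPpos x).ne' (hPtop x)
  intro t ht
  simp only [hHP]
  have hPxpos : ∀ x : ℝ, 0 < (P x).toReal := fun x =>
    ENNReal.toReal_pos (hPpos x).ne' (hPtop x)
  refine tendsto_order.2 ⟨?_, ?_⟩
  · intro c hc
    filter_upwards with x
    have h1le : 1 ≤ (P (x - t)).toReal / (P x).toReal := by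
      rw [le_div_iff₀ (hPxpos x), one_mul]
      exact ENNReal.toReal_mono (hPtop (x - t)) (hPanti (by linarith))
    linarith
  · intro c hc
    set ε := (c - 1) / 4 with hεdef
    have hε : 0 < ε := by rw [hεdef]; linarith
    -- extract δ from hC
    obtain ⟨δ, hδC, hδpos⟩ : ∃ δ : ℝ, Cstar F δ < 1 + ε ∧ 0 < δ := by
      have h := (hC.eventually_lt_const (by linarith : (1:ℝ) < 1 + ε)).and
        eventually_mem_nhdsWithin
      obtain ⟨δ, h1, h2⟩ := h.exists
      exact ⟨δ, h1, h2⟩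
    have hlimsup : ∀ᶠ u in atTop, F (u - δ) / F u < 1 + ε :=
      eventually_lt_of_limsup_lt hδC (hFOL.2 δ hδpos)
    obtain ⟨u₀', hu₀'⟩ := eventually_atTop.mp hlimsup
    set u₀ := max u₀' 1 with hu₀def
    have hu₀pos : (0:ℝ) < u₀ := lt_of_lt_of_le one_pos (le_max_right _ _)
    have hkey : ∀ u : ℝ, u₀ ≤ u → ν (Ioi (u - δ)) ≤ ENNReal.ofReal (1 + ε) * ν (Ioi u) := by
      intro u hu
      have h := hu₀' u (le_trans (le_max_left _ _) hu)
      have : F (u - δ) ≤ (1 + ε) * F u := le_of_lt ((div_lt_iff₀ (hFpos u)).mp h)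
      rw [hν, hν, ← ENNReal.ofReal_mul (by linarith : (0:ℝ) ≤ 1 + ε)]
      exact ENNReal.ofReal_le_ofReal this
    set a := t / δ with hadef
    have ha : 0 < a := div_pos ht hδpos
    have h2a : (0:ℝ) < 2 * a := by linarith
    set κ := l₂ / (2 * (2 * a) ^ α) with hκdef
    have hκpos : 0 < κ := div_pos hl₂ (mul_pos two_pos (Real.rpow_pos_of_pos h2a α))
    set κ' := l₃ / (2 * u₀ ^ α) with hκ'def
    have hκ'pos : 0 < κ' := div_pos hl₃ (mul_pos two_pos (Real.rpow_pos_of_pos hu₀pos α))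
    have hr1pos : (0:ℝ) < 2 * l₁ / l₂ := by positivity
    have hr2pos : (0:ℝ) < 2 * l₁ / l₃ := by positivity
    set c₀ := max ((2 * a) * (2 * l₁ / l₂) ^ α⁻¹) (u₀ * (2 * l₁ / l₃) ^ α⁻¹) with hc₀def
    have hc₀pos : 0 < c₀ :=
      lt_of_lt_of_le (mul_pos h2a (Real.rpow_pos_of_pos hr1pos _)) (le_max_left _ _)
    have hc₀α : 0 < c₀ ^ α := Real.rpow_pos_of_pos hc₀pos α
    have hc₀A : l₁ / c₀ ^ α ≤ κ := by
      have h1' : ((2 * a) * (2 * l₁ / l₂) ^ α⁻¹) ^ α ≤ c₀ ^ α :=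
        Real.rpow_le_rpow (mul_nonneg h2a.le (Real.rpow_nonneg hr1pos.le _))
          (le_max_left _ _) hα.le
      rw [Real.mul_rpow h2a.le (Real.rpow_nonneg hr1pos.le _),
        Real.rpow_inv_rpow hr1pos.le hα.ne'] at h1'
      rw [hκdef, div_le_div_iff₀ hc₀α (mul_pos two_pos (Real.rpow_pos_of_pos h2a α))]
      have e : l₁ * (2 * (2 * a) ^ α) = l₂ * ((2 * a) ^ α * (2 * l₁ / l₂)) := by
        field_simp
      rw [e]
      exact mul_le_mul_of_nonneg_left h1' hl₂.le
    have hc₀C : l₁ / c₀ ^ α ≤ κ' := by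
      have h1' : (u₀ * (2 * l₁ / l₃) ^ α⁻¹) ^ α ≤ c₀ ^ α :=
        Real.rpow_le_rpow (mul_nonneg hu₀pos.le (Real.rpow_nonneg hr2pos.le _))
          (le_max_right _ _) hα.le
      rw [Real.mul_rpow hu₀pos.le (Real.rpow_nonneg hr2pos.le _),
        Real.rpow_inv_rpow hr2pos.le hα.ne'] at h1'
      rw [hκ'def, div_le_div_iff₀ hc₀α (mul_pos two_pos (Real.rpow_pos_of_pos hu₀pos α))]
      have e : l₁ * (2 * u₀ ^ α) = l₃ * (u₀ ^ α * (2 * l₁ / l₃)) := by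
        field_simp
      rw [e]
      exact mul_le_mul_of_nonneg_left h1' hl₃.le
    -- exponential tail bounds
    have hF2 : ∀ᶠ u in atTop, F u ≤ Real.exp (-(l₂ * u ^ α)) := by
      filter_upwards [h2.eventually_lt_const one_pos] with u hu
      have he := Real.exp_pos (l₂ * u ^ α)
      have heq : F u = (Real.exp (l₂ * u ^ α) * F u) * (Real.exp (l₂ * u ^ α))⁻¹ := by
        field_simp
      rw [Real.exp_neg, heq]
      calc (Real.exp (l₂ * u ^ α) * F u) * (Real.exp (l₂ * u ^ α))⁻¹
          ≤ 1 * (Real.exp (l₂ * u ^ α))⁻¹ :=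
            mul_le_mul_of_nonneg_right hu.le (inv_nonneg.mpr he.le)
        _ = (Real.exp (l₂ * u ^ α))⁻¹ := one_mul _
    have hF1 : ∀ᶠ u in atTop, Real.exp (-(l₁ * u ^ α)) ≤ F u := by
      filter_upwards [h1.eventually_ge_atTop 1] with u hu
      have he := Real.exp_pos (l₁ * u ^ α)
      have heq : F u = (Real.exp (l₁ * u ^ α) * F u) * (Real.exp (l₁ * u ^ α))⁻¹ := by
        field_simp
      rw [Real.exp_neg, heq]
      calc (Real.exp (l₁ * u ^ α))⁻¹ = 1 * (Real.exp (l₁ * u ^ α))⁻¹ := (one_mul _).symm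
        _ ≤ (Real.exp (l₁ * u ^ α) * F u) * (Real.exp (l₁ * u ^ α))⁻¹ :=
            mul_le_mul_of_nonneg_right hu (inv_nonneg.mpr he.le)
    have hG3 : ∀ᶠ u in atTop, G u ≤ Real.exp (-(l₃ * u ^ α)) := by
      filter_upwards [h3.eventually_lt_const one_pos] with u hu
      have he := Real.exp_pos (l₃ * u ^ α)
      have heq : G u = (Real.exp (l₃ * u ^ α) * G u) * (Real.exp (l₃ * u ^ α))⁻¹ := by
        field_simp
      rw [Real.exp_neg, heq]
      calc (Real.exp (l₃ * u ^ α) * G u) * (Real.exp (l₃ * u ^ α))⁻¹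
          ≤ 1 * (Real.exp (l₃ * u ^ α))⁻¹ :=
            mul_le_mul_of_nonneg_right hu.le (inv_nonneg.mpr he.le)
        _ = (Real.exp (l₃ * u ^ α))⁻¹ := one_mul _
    have ψa : Tendsto (fun x : ℝ => (x - t) / a) atTop atTop := by
      have h := (tendsto_atTop_add_const_right atTop (-t) tendsto_id).atTop_div_const ha
      simpa [sub_eq_add_neg] using h
    have ψc : Tendsto (fun x : ℝ => x / c₀) atTop atTop := tendsto_id.atTop_div_const hc₀pos
    have ψu : Tendsto (fun x : ℝ => x / u₀) atTop atTop := tendsto_id.atTop_div_const hu₀pos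
    have hGc₀ : 0 < G c₀ := hGpos c₀ hc₀pos.le
    -- exponent → -∞ for the A term
    have hexpA : Tendsto (fun x : ℝ => l₁ * (x / c₀) ^ α - l₂ * ((x - t) / a) ^ α)
        atTop atBot := by
      have hneg : Tendsto (fun x : ℝ => -(κ * x ^ α)) atTop atBot :=
        tendsto_neg_atTop_atBot.comp ((tendsto_rpow_atTop hα).const_mul_atTop hκpos)
      refine tendsto_atBot_mono' atTop ?_ hneg
      filter_upwards [eventually_ge_atTop (2 * t), eventually_ge_atTop 0] with x hx2t hx0
      have hxα : (0:ℝ) ≤ x ^ α := Real.rpow_nonneg hx0 α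
      have e1 : l₁ * (x / c₀) ^ α ≤ κ * x ^ α := by
        rw [Real.div_rpow hx0 hc₀pos.le]
        calc l₁ * (x ^ α / c₀ ^ α) = (l₁ / c₀ ^ α) * x ^ α := by ring
          _ ≤ κ * x ^ α := mul_le_mul_of_nonneg_right hc₀A hxα
      have e2 : 2 * κ * x ^ α ≤ l₂ * ((x - t) / a) ^ α := by
        have h21 : x / (2 * a) ≤ (x - t) / a := by
          rw [div_le_div_iff₀ h2a ha]
          nlinarith
        have h22 : (x / (2 * a)) ^ α ≤ ((x - t) / a) ^ α :=
          Real.rpow_le_rpow (div_nonneg hx0 h2a.le) h21 hα.le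
        rw [Real.div_rpow hx0 h2a.le] at h22
        have e3 : 2 * κ * x ^ α = l₂ * (x ^ α / (2 * a) ^ α) := by
          rw [hκdef]
          field_simp
        rw [e3]
        exact mul_le_mul_of_nonneg_left h22 hl₂.le
      linarith
    have hexpC : Tendsto (fun x : ℝ => l₁ * (x / c₀) ^ α - l₃ * (x / u₀) ^ α)
        atTop atBot := by
      have hneg : Tendsto (fun x : ℝ => -(κ' * x ^ α)) atTop atBot :=
        tendsto_neg_atTop_atBot.comp ((tendsto_rpow_atTop hα).const_mul_atTop hκ'pos)
      refine tendsto_atBot_mono' atTop ?_ hneg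
      filter_upwards [eventually_ge_atTop 0] with x hx0
      have hxα : (0:ℝ) ≤ x ^ α := Real.rpow_nonneg hx0 α
      have e1 : l₁ * (x / c₀) ^ α ≤ κ' * x ^ α := by
        rw [Real.div_rpow hx0 hc₀pos.le]
        calc l₁ * (x ^ α / c₀ ^ α) = (l₁ / c₀ ^ α) * x ^ α := by ring
          _ ≤ κ' * x ^ α := mul_le_mul_of_nonneg_right hc₀C hxα
      have e2 : 2 * κ' * x ^ α = l₃ * (x / u₀) ^ α := by
        rw [Real.div_rpow hx0 hu₀pos.le, hκ'def]
        field_simp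
      linarith
    have heA : ∀ᶠ x in atTop,
        Real.exp (l₁ * (x / c₀) ^ α - l₂ * ((x - t) / a) ^ α) ≤ ε * G c₀ := by
      have h0 := Real.tendsto_exp_atBot.comp hexpA
      exact (h0.eventually_lt_const (mul_pos hε hGc₀)).mono fun x h => h.le
    have heC : ∀ᶠ x in atTop,
        Real.exp (l₁ * (x / c₀) ^ α - l₃ * (x / u₀) ^ α) ≤ ε * G c₀ := by
      have h0 := Real.tendsto_exp_atBot.comp hexpC
      exact (h0.eventually_lt_const (mul_pos hε hGc₀)).mono fun x h => h.le
    have hRA : ∀ᶠ x in atTop, F ((x - t) / a) ≤ ε * (F (x / c₀) * G c₀) := by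
      filter_upwards [ψa.eventually hF2, ψc.eventually hF1, heA] with x hA2 hA1 hA3
      have hkey2 : Real.exp (-(l₂ * ((x - t) / a) ^ α)) ≤ (ε * G c₀) * F (x / c₀) := by
        have e : Real.exp (-(l₂ * ((x - t) / a) ^ α)) =
            Real.exp (l₁ * (x / c₀) ^ α - l₂ * ((x - t) / a) ^ α) *
              Real.exp (-(l₁ * (x / c₀) ^ α)) := by
          rw [← Real.exp_add]
          ring_nf
        rw [e]
        exact mul_le_mul hA3 hA1 (Real.exp_pos _).le (mul_nonneg hε.le hGc₀.le)
      calc F ((x - t) / a) ≤ Real.exp (-(l₂ * ((x - t) / a) ^ α)) := hA2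
        _ ≤ (ε * G c₀) * F (x / c₀) := hkey2
        _ = ε * (F (x / c₀) * G c₀) := by ring
    have hRC : ∀ᶠ x in atTop, G (x / u₀) ≤ ε * (F (x / c₀) * G c₀) := by
      filter_upwards [ψu.eventually hG3, ψc.eventually hF1, heC] with x hA2 hA1 hA3
      have hkey2 : Real.exp (-(l₃ * (x / u₀) ^ α)) ≤ (ε * G c₀) * F (x / c₀) := by
        have e : Real.exp (-(l₃ * (x / u₀) ^ α)) =
            Real.exp (l₁ * (x / c₀) ^ α - l₃ * (x / u₀) ^ α) *
              Real.exp (-(l₁ * (x / c₀) ^ α)) := by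
          rw [← Real.exp_add]
          ring_nf
        rw [e]
        exact mul_le_mul hA3 hA1 (Real.exp_pos _).le (mul_nonneg hε.le hGc₀.le)
      calc G (x / u₀) ≤ Real.exp (-(l₃ * (x / u₀) ^ α)) := hA2
        _ ≤ (ε * G c₀) * F (x / c₀) := hkey2
        _ = ε * (F (x / c₀) * G c₀) := by ring
    -- lower bound for P x
    have hlow : ∀ x : ℝ, 0 < x → ENNReal.ofReal (F (x / c₀) * G c₀) ≤ P x := by
      intro x hx
      have hincl : Ioi c₀ ×ˢ Ioi (x / c₀) ⊆ {p : ℝ × ℝ | x < p.2 * p.1} := by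
        rintro ⟨v, u⟩ ⟨hv, hu⟩
        simp only [mem_Ioi] at hv hu
        have hxc : 0 ≤ x / c₀ := (div_pos hx hc₀pos).le
        have e : x = (x / c₀) * c₀ := (div_mul_cancel₀ x hc₀pos.ne').symm
        show x < u * v
        rw [e]
        exact mul_lt_mul'' hu hv hxc hc₀pos.le
      calc ENNReal.ofReal (F (x / c₀) * G c₀)
          = ν (Ioi (x / c₀)) * ρ (Ioi c₀) := by
            rw [hν, hρ, ← ENNReal.ofReal_mul (hFnn _)]
        _ = (ρ.prod ν) (Ioi c₀ ×ˢ Ioi (x / c₀)) := by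
            rw [Measure.prod_prod, mul_comm]
        _ ≤ P x := measure_mono hincl
    -- main estimate
    have hmain : ∀ᶠ x in atTop, P (x - t) ≤ ENNReal.ofReal (1 + 3 * ε) * P x := by
      filter_upwards [hRA, hRC, eventually_gt_atTop 0] with x hA hCc hx
      set b := x / u₀ with hbdef
      have hQ : (ρ.prod ν) ((Ici (0:ℝ) ×ˢ Ici (0:ℝ))ᶜ) = 0 := by
        have hρ0 : ρ (Iio 0) = 0 := by
          rw [hρdef, Measure.map_apply hYm measurableSet_Iio]
          have e : Y ⁻¹' Iio 0 = ∅ :=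
            eq_empty_iff_forall_notMem.mpr fun ω h => absurd h (not_lt.mpr (hYnn ω))
          rw [e, measure_empty]
        have hν0 : ν (Iio 0) = 0 := by
          rw [hνdef, Measure.map_apply hXm measurableSet_Iio]
          have e : X ⁻¹' Iio 0 = ∅ :=
            eq_empty_iff_forall_notMem.mpr fun ω h => absurd h (not_lt.mpr (hXnn ω))
          rw [e, measure_empty]
        apply le_antisymm _ zero_le
        rw [compl_prod_eq_union]
        calc (ρ.prod ν) ((Ici (0:ℝ))ᶜ ×ˢ univ ∪ univ ×ˢ (Ici (0:ℝ))ᶜ)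
            ≤ (ρ.prod ν) ((Ici (0:ℝ))ᶜ ×ˢ univ) + (ρ.prod ν) (univ ×ˢ (Ici (0:ℝ))ᶜ) :=
              measure_union_le _ _
          _ = 0 := by
              rw [Measure.prod_prod, Measure.prod_prod, compl_Ici, hρ0, hν0]
              simp
      have hdec : P (x - t) ≤ ν (Ioi ((x - t) / a)) +
          ((ρ.prod ν) {p : ℝ × ℝ | x - t < p.2 * p.1 ∧ p.1 ∈ Icc a b} + ρ (Ioi b)) := by
        have hsub1 : {p : ℝ × ℝ | x - t < p.2 * p.1} ⊆
            ({p : ℝ × ℝ | x - t < p.2 * p.1} ∩ (Ici 0 ×ˢ Ici 0)) ∪ (Ici (0:ℝ) ×ˢ Ici (0:ℝ))ᶜ := by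
          intro p hp
          by_cases h : p ∈ Ici (0:ℝ) ×ˢ Ici (0:ℝ)
          · exact Or.inl ⟨hp, h⟩
          · exact Or.inr h
        have hsub2 : {p : ℝ × ℝ | x - t < p.2 * p.1} ∩ (Ici 0 ×ˢ Ici 0) ⊆
            (univ ×ˢ Ioi ((x - t) / a)) ∪
              ({p : ℝ × ℝ | x - t < p.2 * p.1 ∧ p.1 ∈ Icc a b} ∪ (Ioi b ×ˢ univ)) := by
          rintro ⟨v, u⟩ ⟨hp, hv0, hu0⟩
          simp only [mem_setOf_eq] at hp
          simp only [mem_Ici] at hv0 hu0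
          rcases lt_or_ge v a with hva | hav
          · left
            refine ⟨mem_univ _, ?_⟩
            show (x - t) / a < u
            rw [div_lt_iff₀ ha]
            calc x - t < u * v := hp
              _ ≤ u * a := mul_le_mul_of_nonneg_left hva.le hu0
          · rcases le_or_gt v b with hvb | hbv
            · exact Or.inr (Or.inl ⟨hp, hav, hvb⟩)
            · exact Or.inr (Or.inr ⟨hbv, mem_univ _⟩)
        calc P (x - t)
            ≤ (ρ.prod ν) ({p : ℝ × ℝ | x - t < p.2 * p.1} ∩ (Ici 0 ×ˢ Ici 0)) +
              (ρ.prod ν) ((Ici (0:ℝ) ×ˢ Ici (0:ℝ))ᶜ) :=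
              le_trans (measure_mono hsub1) (measure_union_le _ _)
          _ = (ρ.prod ν) ({p : ℝ × ℝ | x - t < p.2 * p.1} ∩ (Ici 0 ×ˢ Ici 0)) := by
              rw [hQ, add_zero]
          _ ≤ (ρ.prod ν) ((univ ×ˢ Ioi ((x - t) / a)) ∪
              ({p : ℝ × ℝ | x - t < p.2 * p.1 ∧ p.1 ∈ Icc a b} ∪ (Ioi b ×ˢ univ))) :=
              measure_mono hsub2
          _ ≤ (ρ.prod ν) (univ ×ˢ Ioi ((x - t) / a)) +
              ((ρ.prod ν) {p : ℝ × ℝ | x - t < p.2 * p.1 ∧ p.1 ∈ Icc a b} +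
                (ρ.prod ν) (Ioi b ×ˢ univ)) :=
              le_trans (measure_union_le _ _) (add_le_add le_rfl (measure_union_le _ _))
          _ = ν (Ioi ((x - t) / a)) +
              ((ρ.prod ν) {p : ℝ × ℝ | x - t < p.2 * p.1 ∧ p.1 ∈ Icc a b} + ρ (Ioi b)) := by
              rw [Measure.prod_prod, Measure.prod_prod, measure_univ, measure_univ, one_mul, mul_one]
      have hB : (ρ.prod ν) {p : ℝ × ℝ | x - t < p.2 * p.1 ∧ p.1 ∈ Icc a b} ≤
          ENNReal.ofReal (1 + ε) * P x := by
        have hmB : MeasurableSet {p : ℝ × ℝ | x - t < p.2 * p.1 ∧ p.1 ∈ Icc a b} :=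
          (measurableSet_lt measurable_const (measurable_snd.mul measurable_fst)).inter
            (measurable_fst measurableSet_Icc)
        rw [Measure.prod_apply hmB]
        have hslice : (fun v => ν (Prod.mk v ⁻¹' {p : ℝ × ℝ | x - t < p.2 * p.1 ∧ p.1 ∈ Icc a b}))
            = (Icc a b).indicator (fun v => ν {u : ℝ | x - t < u * v}) := by
          funext v
          by_cases hv : v ∈ Icc a b
          · rw [indicator_of_mem hv]
            congr 1
            ext u
            simp only [mem_preimage, mem_setOf_eq]
            exact and_iff_left hv
          · rw [indicator_of_notMem hv]
            have e : Prod.mk v ⁻¹' {p : ℝ × ℝ | x - t < p.2 * p.1 ∧ p.1 ∈ Icc a b} = ∅ := by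
              ext u
              simp only [mem_preimage, mem_setOf_eq, mem_empty_iff_false, iff_false]
              exact fun h => hv h.2
            rw [e, measure_empty]
        rw [hslice, lintegral_indicator measurableSet_Icc]
        have hmono : ∫⁻ v in Icc a b, ν {u : ℝ | x - t < u * v} ∂ρ ≤
            ∫⁻ v in Icc a b, ENNReal.ofReal (1 + ε) * ν {u : ℝ | x < u * v} ∂ρ := by
          apply setLIntegral_mono' measurableSet_Icc
          intro v hv
          have hv0 : 0 < v := lt_of_lt_of_le ha hv.1
          have e1 : {u : ℝ | x - t < u * v} = Ioi ((x - t) / v) := by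
            ext u
            simp only [mem_setOf_eq, mem_Ioi]
            rw [div_lt_iff₀ hv0]
          have e2 : {u : ℝ | x < u * v} = Ioi (x / v) := by
            ext u
            simp only [mem_setOf_eq, mem_Ioi]
            rw [div_lt_iff₀ hv0]
          rw [e1, e2]
          have hδv : x / v - δ ≤ (x - t) / v := by
            rw [sub_div]
            have htv : t / v ≤ δ := by
              rw [div_le_iff₀ hv0]
              calc t = δ * a := by rw [hadef]; field_simp
                _ ≤ δ * v := mul_le_mul_of_nonneg_left hv.1 hδpos.le
            linarith
          have hu₀x : u₀ ≤ x / v := by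
            rw [le_div_iff₀ hv0]
            calc u₀ * v ≤ u₀ * b := mul_le_mul_of_nonneg_left hv.2 hu₀pos.le
              _ = x := by rw [hbdef]; field_simp
          calc ν (Ioi ((x - t) / v)) ≤ ν (Ioi (x / v - δ)) := measure_mono (Ioi_subset_Ioi hδv)
            _ ≤ ENNReal.ofReal (1 + ε) * ν (Ioi (x / v)) := hkey _ hu₀x
        calc ∫⁻ v in Icc a b, ν {u : ℝ | x - t < u * v} ∂ρ
            ≤ ∫⁻ v in Icc a b, ENNReal.ofReal (1 + ε) * ν {u : ℝ | x < u * v} ∂ρ := hmono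
          _ = ENNReal.ofReal (1 + ε) * ∫⁻ v in Icc a b, ν {u : ℝ | x < u * v} ∂ρ :=
              lintegral_const_mul _ (measurable_measure_prodMk_left (hSm x))
          _ ≤ ENNReal.ofReal (1 + ε) * P x := by
              apply mul_le_mul_right
              calc ∫⁻ v in Icc a b, ν {u : ℝ | x < u * v} ∂ρ
                  ≤ ∫⁻ v, ν {u : ℝ | x < u * v} ∂ρ := setLIntegral_le_lintegral _ _
                _ = P x := (Measure.prod_apply (hSm x)).symm
      have hAterm : ν (Ioi ((x - t) / a)) ≤ ENNReal.ofReal ε * P x := by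
        rw [hν]
        calc ENNReal.ofReal (F ((x - t) / a))
            ≤ ENNReal.ofReal (ε * (F (x / c₀) * G c₀)) := ENNReal.ofReal_le_ofReal hA
          _ = ENNReal.ofReal ε * ENNReal.ofReal (F (x / c₀) * G c₀) := ENNReal.ofReal_mul hε.le
          _ ≤ ENNReal.ofReal ε * P x := mul_le_mul_right (hlow x hx) _
      have hCterm : ρ (Ioi b) ≤ ENNReal.ofReal ε * P x := by
        rw [hρ]
        calc ENNReal.ofReal (G b)
            ≤ ENNReal.ofReal (ε * (F (x / c₀) * G c₀)) := ENNReal.ofReal_le_ofReal hCc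
          _ = ENNReal.ofReal ε * ENNReal.ofReal (F (x / c₀) * G c₀) := ENNReal.ofReal_mul hε.le
          _ ≤ ENNReal.ofReal ε * P x := mul_le_mul_right (hlow x hx) _
      calc P (x - t) ≤ ν (Ioi ((x - t) / a)) +
          ((ρ.prod ν) {p : ℝ × ℝ | x - t < p.2 * p.1 ∧ p.1 ∈ Icc a b} + ρ (Ioi b)) := hdec
        _ ≤ ENNReal.ofReal ε * P x + (ENNReal.ofReal (1 + ε) * P x + ENNReal.ofReal ε * P x) :=
            add_le_add hAterm (add_le_add hB hCterm)
        _ = ENNReal.ofReal (1 + 3 * ε) * P x := by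
            rw [← add_mul, ← add_mul, ← ENNReal.ofReal_add (by linarith : (0:ℝ) ≤ 1 + ε) hε.le,
              ← ENNReal.ofReal_add hε.le (by linarith : (0:ℝ) ≤ 1 + ε + ε)]
            congr 2
            ring
    filter_upwards [hmain] with x hx
    have h1' : (P (x - t)).toReal ≤ (1 + 3 * ε) * (P x).toReal := by
      have h2' := ENNReal.toReal_mono (ENNReal.mul_ne_top ENNReal.ofReal_ne_top (hPtop x)) hx
      rwa [ENNReal.toReal_mul, ENNReal.toReal_ofReal (by linarith : (0:ℝ) ≤ 1 + 3 * ε)] at h2'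
    rw [div_lt_iff₀ (hPxpos x)]
    calc (P (x - t)).toReal ≤ (1 + 3 * ε) * (P x).toReal := h1'
      _ < c * (P x).toReal := by
        apply mul_lt_mul_of_pos_right _ (hPxpos x)
        rw [hεdef]
        linarith
end
end

section
/- Let α>0. Assume that F belongs to the generalized long-tailed class 𝒪ℒ, that Ḡ(x)>0 for all x≥0, that e^{λ₁x^α}·F̄(x)→∞ as x→∞ for some λ₁>0 and e^{λ₂x^α}·F̄(x)→0 as x→∞ for some λ₂>0, and that e^{λ₃x^α}·Ḡ(x)→0 as x→∞ for some λ₃>0. Then for each t>0 the product convolution H satisfies 1 ≤ C^*(H,t) ≤ C^*(F,0) and C_*(H,t) ≥ C_*(F,0). -/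
open MeasureTheory ProbabilityTheory Filter Topology Asymptotics Set

noncomputable section

section Aux

set_option linter.unusedSectionVars false
set_option linter.unusedVariables false

variable {Ω : Type*} [MeasurableSpace Ω] (μ : Measure Ω) [IsProbabilityMeasure μ] (X Y : Ω → ℝ)

lemma rvTail_nonneg' (x : ℝ) : 0 ≤ rvTail μ X x := ENNReal.toReal_nonneg

lemma rvTail_anti' : Antitone (rvTail μ X) := by
  intro x y hxy
  refine ENNReal.toReal_mono (measure_ne_top μ _) (measure_mono ?_)
  intro ω hω; exact lt_of_le_of_lt hxy hω

lemma rvTail_eq_map' (hXm : Measurable X) (x : ℝ) :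
    (Measure.map X μ) (Ioi x) = ENNReal.ofReal (rvTail μ X x) := by
  rw [Measure.map_apply hXm measurableSet_Ioi, rvTail,
    ENNReal.ofReal_toReal (measure_ne_top μ _)]
  rfl

lemma rvTail_prod_lower' (hXm : Measurable X) (hYm : Measurable Y)
    (hindep : IndepFun X Y μ) (b x : ℝ) (hb : 0 < b) (hx : 0 ≤ x) :
    rvTail μ X (x / b) * rvTail μ Y b ≤ rvTail μ (fun ω => X ω * Y ω) x := by
  have hincl : X ⁻¹' (Ioi (x / b)) ∩ Y ⁻¹' (Ioi b) ⊆ {ω | x < X ω * Y ω} := by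
    intro ω ⟨h1, h2⟩
    simp only [mem_preimage, mem_Ioi] at h1 h2
    have hxb : 0 ≤ x / b := div_nonneg hx hb.le
    calc x = (x / b) * b := by field_simp
    _ < X ω * Y ω := mul_lt_mul'' h1 h2 hxb hb.le
  have hmeas := hindep.measure_inter_preimage_eq_mul (Ioi (x / b)) (Ioi b) measurableSet_Ioi
    measurableSet_Ioi
  have hle : μ (X ⁻¹' (Ioi (x / b))) * μ (Y ⁻¹' (Ioi b)) ≤ μ {ω | x < X ω * Y ω} := by
    rw [← hmeas]; exact measure_mono hincl
  have := ENNReal.toReal_mono (measure_ne_top μ _) hle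
  rw [ENNReal.toReal_mul] at this
  exact this

lemma rvTail_prod_pos' (hXm : Measurable X) (hYm : Measurable Y)
    (hindep : IndepFun X Y μ) (hFpos : ∀ x, 0 < rvTail μ X x)
    (hGpos : ∀ x ≥ (0:ℝ), 0 < rvTail μ Y x) (x : ℝ) :
    0 < rvTail μ (fun ω => X ω * Y ω) x := by
  have h1 : rvTail μ (fun ω => X ω * Y ω) (max x 0) ≤ rvTail μ (fun ω => X ω * Y ω) x :=
    rvTail_anti' μ _ (le_max_left _ _)
  refine lt_of_lt_of_le ?_ h1
  refine lt_of_lt_of_le ?_ (rvTail_prod_lower' μ X Y hXm hYm hindep 1 (max x 0) one_pos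
    (le_max_right _ _))
  exact mul_pos (hFpos _) (hGpos 1 one_pos.le)

lemma tail_prod_restrict' (hXm : Measurable X) (hYm : Measurable Y)
    (hindep : IndepFun X Y μ) (r : ℝ) (A : Set ℝ) (hA : MeasurableSet A)
    (hApos : A ⊆ Ioi 0) :
    μ {ω | r < X ω * Y ω ∧ Y ω ∈ A} =
      ∫⁻ y in A, (Measure.map X μ) (Ioi (r / y)) ∂(Measure.map Y μ) := by
  have hmap : μ.map (fun ω => (X ω, Y ω)) = (μ.map X).prod (μ.map Y) :=
    (indepFun_iff_map_prod_eq_prod_map_map hXm.aemeasurable hYm.aemeasurable).mp hindep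
  set S : Set (ℝ × ℝ) := {p : ℝ × ℝ | r < p.1 * p.2 ∧ p.2 ∈ A} with hS
  have hSm : MeasurableSet S := by
    apply MeasurableSet.inter
    · exact measurableSet_lt measurable_const (measurable_fst.mul measurable_snd)
    · exact measurable_snd hA
  have h1 : μ {ω | r < X ω * Y ω ∧ Y ω ∈ A} = (μ.map (fun ω => (X ω, Y ω))) S := by
    rw [Measure.map_apply (hXm.prodMk hYm) hSm]
    rfl
  rw [h1, hmap, Measure.prod_apply_symm hSm]
  have h2 : ∀ y ∈ A, ((fun x => (x, y)) ⁻¹' S) = Ioi (r / y) := by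
    intro y hy
    have hy0 : 0 < y := hApos hy
    ext u
    simp only [mem_preimage, hS, mem_setOf_eq, hy, and_true, mem_Ioi, div_lt_iff₀ hy0]
  have h3 : ∀ y ∉ A, ((fun x => (x, y)) ⁻¹' S) = (∅ : Set ℝ) := by
    intro y hy
    ext u
    simp [hS, hy]
  calc ∫⁻ y, (μ.map X) ((fun x => (x, y)) ⁻¹' S) ∂(μ.map Y)
      = ∫⁻ y, A.indicator (fun y => (μ.map X) (Ioi (r / y))) y ∂(μ.map Y) := by
        congr 1; ext y
        by_cases hy : y ∈ A
        · rw [h2 y hy, indicator_of_mem hy]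
        · rw [h3 y hy, indicator_of_notMem hy]; simp
    _ = ∫⁻ y in A, (μ.map X) (Ioi (r / y)) ∂(μ.map Y) := by
        rw [lintegral_indicator hA]

lemma tail_prod_middle' (hXm : Measurable X) (hYm : Measurable Y)
    (hindep : IndepFun X Y μ) (t s a M C x : ℝ)
    (ha : 0 < a) (hM : 0 < M) (ht : 0 ≤ t) (hts : t / a ≤ s) (hC : 0 ≤ C)
    (key : ∀ v ≥ M, rvTail μ X (v - s) ≤ C * rvTail μ X v) :
    μ {ω | x - t < X ω * Y ω ∧ Y ω ∈ Ioc a (x / M)} ≤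
      ENNReal.ofReal C * μ {ω | x < X ω * Y ω} := by
  have hApos : Ioc a (x / M) ⊆ Ioi 0 := fun y hy => lt_of_lt_of_le ha hy.1.le
  rw [tail_prod_restrict' μ X Y hXm hYm hindep _ _ measurableSet_Ioc hApos]
  have hmono : ∀ y ∈ Ioc a (x / M),
      (Measure.map X μ) (Ioi ((x - t) / y)) ≤
        ENNReal.ofReal C * (Measure.map X μ) (Ioi (x / y)) := by
    intro y hy
    have hy0 : 0 < y := hApos hy
    have h1 : x / y - s ≤ (x - t) / y := by
      rw [sub_div]
      have : t / y ≤ s := le_trans (div_le_div_of_nonneg_left ht ha hy.1.le) hts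
      linarith
    have hvM : M ≤ x / y := (le_div_iff₀ hy0).mpr (by
      calc M * y = y * M := mul_comm _ _
      _ ≤ x := (le_div_iff₀ hM).mp hy.2)
    calc (Measure.map X μ) (Ioi ((x - t) / y))
        ≤ (Measure.map X μ) (Ioi (x / y - s)) := measure_mono (Ioi_subset_Ioi h1)
      _ = ENNReal.ofReal (rvTail μ X (x / y - s)) := rvTail_eq_map' μ X hXm _
      _ ≤ ENNReal.ofReal (C * rvTail μ X (x / y)) :=
          ENNReal.ofReal_le_ofReal (key _ hvM)
      _ = ENNReal.ofReal C * ENNReal.ofReal (rvTail μ X (x / y)) :=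
          ENNReal.ofReal_mul hC
      _ = ENNReal.ofReal C * (Measure.map X μ) (Ioi (x / y)) := by
          rw [rvTail_eq_map' μ X hXm]
  calc ∫⁻ y in Ioc a (x / M), (Measure.map X μ) (Ioi ((x - t) / y)) ∂(Measure.map Y μ)
      ≤ ∫⁻ y in Ioc a (x / M),
          ENNReal.ofReal C * (Measure.map X μ) (Ioi (x / y)) ∂(Measure.map Y μ) := by
        refine setLIntegral_mono ?_ hmono
        apply Measurable.const_mul
        have hanti : Antitone (fun v : ℝ => (Measure.map X μ) (Ioi v)) := by
          intro u v huv
          exact measure_mono (Ioi_subset_Ioi huv)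
        exact hanti.measurable.comp (measurable_const.div measurable_id)
    _ = ENNReal.ofReal C *
          ∫⁻ y in Ioc a (x / M), (Measure.map X μ) (Ioi (x / y)) ∂(Measure.map Y μ) :=
        lintegral_const_mul' _ _ ENNReal.ofReal_ne_top
    _ = ENNReal.ofReal C * μ {ω | x < X ω * Y ω ∧ Y ω ∈ Ioc a (x / M)} := by
        rw [tail_prod_restrict' μ X Y hXm hYm hindep _ _ measurableSet_Ioc hApos]
    _ ≤ ENNReal.ofReal C * μ {ω | x < X ω * Y ω} := by
        have : {ω | x < X ω * Y ω ∧ Y ω ∈ Ioc a (x / M)} ⊆ {ω | x < X ω * Y ω} :=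
          fun ω h => h.1
        exact mul_le_mul_right (measure_mono this) _

lemma rpow_diff_tendsto' {α c₁ c₂ t : ℝ} (hα : 0 < α) (hc₁ : 0 < c₁) (hc₂ : 0 ≤ c₂)
    (hlt : c₂ < c₁) (ht : 0 ≤ t) :
    Filter.Tendsto (fun x => c₁ * (x - t) ^ α - c₂ * x ^ α) Filter.atTop Filter.atTop := by
  set q : ℝ := (c₂ / c₁ + 1) / 2 with hq
  have hq0 : 0 ≤ q := by positivity
  have hq1 : q < 1 := by
    have : c₂ / c₁ < 1 := (div_lt_one hc₁).mpr hlt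
    rw [hq]; linarith
  set r : ℝ := q ^ (1 / α) with hr
  have hr0 : 0 ≤ r := Real.rpow_nonneg hq0 _
  have hr1 : r < 1 := Real.rpow_lt_one hq0 hq1 (by positivity)
  have hrα : r ^ α = q := by
    rw [hr, ← Real.rpow_mul hq0, one_div_mul_cancel hα.ne', Real.rpow_one]
  have hkey : ∀ᶠ x in Filter.atTop,
      ((c₁ - c₂) / 2) * x ^ α ≤ c₁ * (x - t) ^ α - c₂ * x ^ α := by
    filter_upwards [Filter.eventually_ge_atTop (max (t / (1 - r)) 0)] with x hx
    have hx0 : 0 ≤ x := le_trans (le_max_right _ _) hx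
    have hrx : r * x ≤ x - t := by
      have h1 : t / (1 - r) ≤ x := le_trans (le_max_left _ _) hx
      have h2 : t ≤ (1 - r) * x := by
        rw [div_le_iff₀ (by linarith)] at h1; linarith [h1]
      nlinarith
    have h3 : q * x ^ α ≤ (x - t) ^ α := by
      calc q * x ^ α = r ^ α * x ^ α := by rw [hrα]
        _ = (r * x) ^ α := (Real.mul_rpow hr0 hx0).symm
        _ ≤ (x - t) ^ α := Real.rpow_le_rpow (by positivity) hrx hα.le
    have h4 : c₁ * (q * x ^ α) ≤ c₁ * (x - t) ^ α :=
      mul_le_mul_of_nonneg_left h3 hc₁.le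
    have hq' : c₁ * q = (c₂ + c₁) / 2 := by
      rw [hq]; field_simp
    nlinarith [Real.rpow_nonneg hx0 α]
  refine Filter.tendsto_atTop_mono' _ hkey ?_
  exact (tendsto_rpow_atTop hα).const_mul_atTop (by linarith)

lemma event_exp_small' {α : ℝ} (T₁ T₂ : ℝ → ℝ) (l u a b t ε' : ℝ) (hα : 0 < α)
    (ha : 0 < a) (hb : 0 < b) (ht : 0 ≤ t) (hε' : 0 < ε') (hu : 0 ≤ u)
    (hcoef : u / b ^ α < l / a ^ α)
    (h_up : ∀ᶠ v in Filter.atTop, T₁ v ≤ Real.exp (-(l * v ^ α)))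
    (h_lo : ∀ᶠ v in Filter.atTop, Real.exp (-(u * v ^ α)) ≤ T₂ v) :
    ∀ᶠ x in Filter.atTop, T₁ ((x - t) / a) ≤ ε' * T₂ (x / b) := by
  set c₁ : ℝ := l / a ^ α with hc₁def
  set c₂ : ℝ := u / b ^ α with hc₂def
  have haα : (0:ℝ) < a ^ α := Real.rpow_pos_of_pos ha _
  have hbα : (0:ℝ) < b ^ α := Real.rpow_pos_of_pos hb _
  have hc₂0 : 0 ≤ c₂ := div_nonneg hu hbα.le
  have hc₁0 : 0 < c₁ := lt_of_le_of_lt hc₂0 hcoef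
  have hD := rpow_diff_tendsto' hα hc₁0 hc₂0 hcoef ht
  have hexp : Filter.Tendsto (fun x => Real.exp (-(c₁ * (x - t) ^ α - c₂ * x ^ α)))
      Filter.atTop (nhds 0) :=
    Real.tendsto_exp_atBot.comp (Filter.tendsto_neg_atBot_iff.mpr hD)
  have hexp' : ∀ᶠ x in Filter.atTop,
      Real.exp (-(c₁ * (x - t) ^ α - c₂ * x ^ α)) ≤ ε' :=
    (hexp.eventually_lt_const hε').mono fun x hx => hx.le
  have htend₁ : Filter.Tendsto (fun x : ℝ => (x - t) / a) Filter.atTop Filter.atTop :=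
    (Filter.tendsto_atTop_add_const_right _ (-t) Filter.tendsto_id).atTop_div_const ha
  have htend₂ : Filter.Tendsto (fun x : ℝ => x / b) Filter.atTop Filter.atTop :=
    Filter.tendsto_id.atTop_div_const hb
  filter_upwards [htend₁.eventually h_up, htend₂.eventually h_lo, hexp',
    Filter.eventually_ge_atTop (max t 0)] with x hup hlo hsm hx
  have hxt : 0 ≤ x - t := by
    have := le_trans (le_max_left t 0) hx; linarith
  have hx0 : 0 ≤ x := le_trans (le_max_right t 0) hx
  have e₁ : l * ((x - t) / a) ^ α = c₁ * (x - t) ^ α := by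
    rw [Real.div_rpow hxt ha.le, hc₁def]; field_simp
  have e₂ : u * (x / b) ^ α = c₂ * x ^ α := by
    rw [Real.div_rpow hx0 hb.le, hc₂def]; field_simp
  calc T₁ ((x - t) / a) ≤ Real.exp (-(l * ((x - t) / a) ^ α)) := hup
    _ = Real.exp (-(c₁ * (x - t) ^ α - c₂ * x ^ α)) * Real.exp (-(c₂ * x ^ α)) := by
        rw [← Real.exp_add, e₁]; ring_nf
    _ ≤ ε' * Real.exp (-(c₂ * x ^ α)) :=
        mul_le_mul_of_nonneg_right hsm (Real.exp_nonneg _)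
    _ = ε' * Real.exp (-(u * (x / b) ^ α)) := by rw [e₂]
    _ ≤ ε' * T₂ (x / b) := mul_le_mul_of_nonneg_left hlo hε'.le

lemma tail_chain' (F : ℝ → ℝ) (c : ℝ) (hc : 0 ≤ c) (n : ℕ)
    (x₀ : ℝ) (hstep : ∀ x ≥ x₀, c * F x ≤ F (x - 1 / n)) :
    ∀ k ≤ n, ∀ x ≥ x₀ + 1, c ^ k * F x ≤ F (x - k * (1 / n)) := by
  intro k
  induction k with
  | zero => intro _ x _; simp
  | succ k ih =>
    intro hk x hx
    have hk' : k ≤ n := le_of_lt (Nat.lt_of_succ_le hk)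
    have hn0 : 0 < (n:ℝ) := by
      have : 1 ≤ n := le_trans (Nat.succ_le_succ (Nat.zero_le _)) hk
      exact_mod_cast this
    have hkn : (k:ℝ) * (1 / n) ≤ 1 := by
      rw [mul_one_div, div_le_one hn0]; exact_mod_cast hk'
    have hx' : x - k * (1 / n) ≥ x₀ := by linarith
    have h1 : c * F (x - k * (1 / n)) ≤ F ((x - k * (1 / n)) - 1 / n) := hstep _ hx'
    have h2 : c ^ k * F x ≤ F (x - k * (1 / n)) := ih hk' x hx
    calc c ^ (k + 1) * F x = c * (c ^ k * F x) := by ring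
      _ ≤ c * F (x - k * (1 / n)) := mul_le_mul_of_nonneg_left h2 hc
      _ ≤ F ((x - k * (1 / n)) - 1 / n) := h1
      _ = F (x - (k + 1 : ℕ) * (1 / n)) := by push_cast; ring_nf

lemma Cflat_le_rpow' (F : ℝ → ℝ) (hFpos : ∀ x, 0 < F x) (L : ℝ) (hL : 1 ≤ L)
    (hbound : ∀ᶠ x in atTop, F (x - 1) / F x ≤ L) (n : ℕ) (hn : 1 ≤ n) :
    Cflat F (1 / n) ≤ L ^ ((n:ℝ)⁻¹) := by
  have hn0 : 0 < (n:ℝ) := by exact_mod_cast hn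
  have hL0 : 0 < L := lt_of_lt_of_le one_pos hL
  have hrpos : 0 < L ^ ((n:ℝ)⁻¹) := Real.rpow_pos_of_pos hL0 _
  by_contra hcon
  push_neg at hcon
  set c : ℝ := (L ^ ((n:ℝ)⁻¹) + Cflat F (1 / n)) / 2 with hcdef
  have hc1 : L ^ ((n:ℝ)⁻¹) < c := by rw [hcdef]; linarith
  have hc2 : c < Cflat F (1 / n) := by rw [hcdef]; linarith
  have hc0 : 0 ≤ c := le_of_lt (lt_trans hrpos hc1)
  have hbd : IsBoundedUnder (· ≥ ·) atTop (fun x => F (x - 1 / n) / F x) :=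
    Filter.isBoundedUnder_of ⟨0, fun x => div_nonneg (hFpos _).le (hFpos _).le⟩
  have hev : ∀ᶠ x in atTop, c < F (x - 1 / n) / F x :=
    Filter.eventually_lt_of_lt_liminf hc2 hbd
  obtain ⟨x₀, hx₀⟩ := (hev.and hbound).exists_forall_of_atTop
  have hstep : ∀ x ≥ x₀, c * F x ≤ F (x - 1 / n) := by
    intro x hx
    exact le_of_lt ((lt_div_iff₀ (hFpos x)).mp (hx₀ x hx).1)
  have hchain := tail_chain' F c hc0 n x₀ hstep n le_rfl (x₀ + 1) le_rfl
  have hnn : (n:ℝ) * (1 / n) = 1 := by field_simp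
  rw [hnn] at hchain
  have hup' : F (x₀ + 1 - 1) ≤ L * F (x₀ + 1) :=
    (div_le_iff₀ (hFpos _)).mp (hx₀ (x₀ + 1) (by linarith)).2
  have hcn : c ^ n ≤ L := by
    have h1 : c ^ n * F (x₀ + 1) ≤ L * F (x₀ + 1) := le_trans hchain hup'
    exact le_of_mul_le_mul_right h1 (hFpos _)
  have hLn : L = (L ^ ((n:ℝ)⁻¹)) ^ n := by
    rw [← Real.rpow_natCast (L ^ ((n:ℝ)⁻¹)) n, ← Real.rpow_mul hL0.le,
      inv_mul_cancel₀ hn0.ne', Real.rpow_one]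
  have hlt : (L ^ ((n:ℝ)⁻¹)) ^ n < c ^ n :=
    pow_lt_pow_left₀ hc1 hrpos.le (by omega)
  rw [← hLn] at hlt
  linarith

end Aux

set_option maxHeartbeats 1000000

/-- under the exponential-order conditions and `F ∈ 𝒪ℒ`, for each `t > 0`
the product convolution `H` satisfies `1 ≤ C^*(H,t) ≤ C^*(F,0)` and `C_*(H,t) ≥ C_*(F,0)`,
where, by monotonicity in `t`, `C^*(F,0) = inf_{s>0} C^*(F,s)` and
`C_*(F,0) = inf_{s>0} C_*(F,s)`. -/
theorem stmt_3 {Ω : Type*} [MeasurableSpace Ω] (μ : Measure Ω) [IsProbabilityMeasure μ]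
    (X Y : Ω → ℝ) (hXm : Measurable X) (hYm : Measurable Y)
    (hXnn : ∀ ω, 0 ≤ X ω) (hYnn : ∀ ω, 0 ≤ Y ω)
    (hindep : IndepFun X Y μ)
    (α : ℝ) (hα : 0 < α)
    (hFOL : IsOL (rvTail μ X))
    (hGpos : ∀ x ≥ (0:ℝ), 0 < rvTail μ Y x)
    (h1 : ∃ l₁ > (0:ℝ), Tendsto (fun x => Real.exp (l₁ * x ^ α) * rvTail μ X x) atTop atTop)
    (h2 : ∃ l₂ > (0:ℝ), Tendsto (fun x => Real.exp (l₂ * x ^ α) * rvTail μ X x) atTop (𝓝 0))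
    (h3 : ∃ l₃ > (0:ℝ), Tendsto (fun x => Real.exp (l₃ * x ^ α) * rvTail μ Y x) atTop (𝓝 0)) :
    ∀ t > (0:ℝ),
      1 ≤ Cstar (rvTail μ (fun ω => X ω * Y ω)) t ∧
      Cstar (rvTail μ (fun ω => X ω * Y ω)) t ≤ sInf (Cstar (rvTail μ X) '' Ioi 0) ∧
      sInf (Cflat (rvTail μ X) '' Ioi 0) ≤ Cflat (rvTail μ (fun ω => X ω * Y ω)) t := by
  intro t ht
  obtain ⟨hFpos, hFbd⟩ := hFOL
  set F : ℝ → ℝ := rvTail μ X with hFdef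
  set G : ℝ → ℝ := rvTail μ Y with hGdef
  set Hb : ℝ → ℝ := rvTail μ (fun ω => X ω * Y ω) with hHdef
  have hHpos : ∀ x, 0 < Hb x := rvTail_prod_pos' μ X Y hXm hYm hindep hFpos hGpos
  have hHanti : Antitone Hb := rvTail_anti' μ _
  -- the key eventual bound
  have KEY : ∀ s > (0:ℝ), ∀ ε > (0:ℝ),
      ∀ᶠ x in atTop, Hb (x - t) ≤ (Cstar F s + ε) * Hb x := by
    intro s hs ε hε
    obtain ⟨l₁, hl₁, h1'⟩ := h1
    obtain ⟨l₂, hl₂, h2'⟩ := h2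
    obtain ⟨l₃, hl₃, h3'⟩ := h3
    have hF_lo : ∀ᶠ v in atTop, Real.exp (-(l₁ * v ^ α)) ≤ F v := by
      filter_upwards [h1'.eventually_ge_atTop 1] with v hv
      calc Real.exp (-(l₁ * v ^ α)) = Real.exp (-(l₁ * v ^ α)) * 1 := (mul_one _).symm
        _ ≤ Real.exp (-(l₁ * v ^ α)) * (Real.exp (l₁ * v ^ α) * F v) :=
            mul_le_mul_of_nonneg_left hv (Real.exp_nonneg _)
        _ = F v := by rw [← mul_assoc, ← Real.exp_add]; simp
    have hF_up : ∀ᶠ v in atTop, F v ≤ Real.exp (-(l₂ * v ^ α)) := by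
      filter_upwards [h2'.eventually_lt_const one_pos] with v hv
      calc F v = Real.exp (-(l₂ * v ^ α)) * (Real.exp (l₂ * v ^ α) * F v) := by
            rw [← mul_assoc, ← Real.exp_add]; simp
        _ ≤ Real.exp (-(l₂ * v ^ α)) * 1 :=
            mul_le_mul_of_nonneg_left hv.le (Real.exp_nonneg _)
        _ = Real.exp (-(l₂ * v ^ α)) := mul_one _
    have hG_up : ∀ᶠ v in atTop, G v ≤ Real.exp (-(l₃ * v ^ α)) := by
      filter_upwards [h3'.eventually_lt_const one_pos] with v hv
      calc G v = Real.exp (-(l₃ * v ^ α)) * (Real.exp (l₃ * v ^ α) * G v) := by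
            rw [← mul_assoc, ← Real.exp_add]; simp
        _ ≤ Real.exp (-(l₃ * v ^ α)) * 1 :=
            mul_le_mul_of_nonneg_left hv.le (Real.exp_nonneg _)
        _ = Real.exp (-(l₃ * v ^ α)) := mul_one _
    set C : ℝ := Cstar F s with hCdef
    have hC0 : 0 ≤ C :=
      le_limsup_of_frequently_le
        ((Eventually.of_forall fun x => div_nonneg (hFpos _).le (hFpos _).le).frequently)
        (hFbd s hs)
    have hCe : ∀ᶠ v in atTop, F (v - s) ≤ (C + ε / 2) * F v := by
      have hlt : Filter.limsup (fun x => F (x - s) / F x) atTop < C + ε / 2 := by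
        rw [hCdef]; unfold Cstar; linarith
      filter_upwards [eventually_lt_of_limsup_lt hlt (hFbd s hs)] with v hv
      exact le_of_lt ((div_lt_iff₀ (hFpos v)).mp hv)
    obtain ⟨M₀, hM₀⟩ := hCe.exists_forall_of_atTop
    set M : ℝ := max M₀ 1 with hMdef
    have hM : 0 < M := lt_of_lt_of_le one_pos (le_max_right _ _)
    have hkeyM : ∀ v ≥ M, F (v - s) ≤ (C + ε / 2) * F v := fun v hv =>
      hM₀ v (le_trans (le_max_left _ _) hv)
    set a : ℝ := t / s with hadef
    have ha : 0 < a := div_pos ht hs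
    have hta : t / a = s := by rw [hadef]; field_simp
    set m : ℝ := min l₂ l₃ with hmdef
    have hm : 0 < m := lt_min hl₂ hl₃
    have hql : (0:ℝ) < l₁ / m + 1 := by positivity
    set b : ℝ := (a + M) * (l₁ / m + 1) ^ (1 / α) with hbdef
    have haM : 0 < a + M := by linarith
    have hb : 0 < b := mul_pos haM (Real.rpow_pos_of_pos hql _)
    have hbα : b ^ α = (a + M) ^ α * (l₁ / m + 1) := by
      rw [hbdef, Real.mul_rpow haM.le (Real.rpow_nonneg hql.le _),
        ← Real.rpow_mul hql.le, one_div_mul_cancel hα.ne', Real.rpow_one]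
    have haMα : a ^ α ≤ (a + M) ^ α := Real.rpow_le_rpow ha.le (by linarith) hα.le
    have hMMα : M ^ α ≤ (a + M) ^ α := Real.rpow_le_rpow hM.le (by linarith) hα.le
    have haα : (0:ℝ) < a ^ α := Real.rpow_pos_of_pos ha _
    have hMα0 : (0:ℝ) < M ^ α := Real.rpow_pos_of_pos hM _
    have hbα0 : (0:ℝ) < b ^ α := Real.rpow_pos_of_pos hb _
    have hcoef : ∀ l' c : ℝ, 0 < l' → m ≤ l' → 0 < c ^ α → c ^ α ≤ (a + M) ^ α →
        l₁ / b ^ α < l' / c ^ α := by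
      intro l' c hl' hml hcα hcαle
      rw [div_lt_div_iff₀ hbα0 hcα, hbα]
      have hq : 1 ≤ l' / m := (one_le_div hm).mpr hml
      have h2 : l₁ ≤ l' * (l₁ / m) := by
        have := mul_le_mul_of_nonneg_left hq hl₁.le
        rw [mul_one] at this
        calc l₁ ≤ l₁ * (l' / m) := this
          _ = l' * (l₁ / m) := by ring
      calc l₁ * c ^ α ≤ l₁ * (a + M) ^ α := mul_le_mul_of_nonneg_left hcαle hl₁.le
        _ < (l₁ + l') * (a + M) ^ α := by nlinarith
        _ ≤ (l' * (l₁ / m) + l') * (a + M) ^ α := by nlinarith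
        _ = l' * ((a + M) ^ α * (l₁ / m + 1)) := by ring
    have hcoef₂ : l₁ / b ^ α < l₂ / a ^ α := hcoef l₂ a hl₂ (min_le_left _ _) haα haMα
    have hcoef₃ : l₁ / b ^ α < l₃ / M ^ α := hcoef l₃ M hl₃ (min_le_right _ _) hMα0 hMMα
    have hGb : 0 < G b := hGpos b hb.le
    set ε₁ : ℝ := (ε / 4) * G b with hε₁def
    have hε₁ : 0 < ε₁ := by positivity
    have hterm1 : ∀ᶠ x in atTop, F ((x - t) / a) ≤ ε₁ * F (x / b) :=
      event_exp_small' F F l₂ l₁ a b t ε₁ hα ha hb ht.le hε₁ hl₁.le hcoef₂ hF_up hF_lo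
    have hterm3 : ∀ᶠ x in atTop, G (x / M) ≤ ε₁ * F (x / b) := by
      have := event_exp_small' G F l₃ l₁ M b 0 ε₁ hα hM hb le_rfl hε₁ hl₁.le hcoef₃ hG_up hF_lo
      filter_upwards [this] with x hx
      simpa using hx
    have hCε20 : (0:ℝ) ≤ C + ε / 2 := by linarith
    have hCε0 : (0:ℝ) ≤ C + ε := by linarith
    filter_upwards [hterm1, hterm3, eventually_ge_atTop (0:ℝ)] with x hx1 hx3 hx0
    have hsub : {ω | x - t < X ω * Y ω} ⊆
        ({ω | (x - t) / a < X ω} ∪ {ω | x - t < X ω * Y ω ∧ Y ω ∈ Ioc a (x / M)})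
          ∪ {ω | x / M < Y ω} := by
      intro ω hω
      by_cases hya : Y ω ≤ a
      · left; left
        have hXa : X ω * Y ω ≤ X ω * a := mul_le_mul_of_nonneg_left hya (hXnn ω)
        have : x - t < X ω * a := lt_of_lt_of_le hω hXa
        exact (div_lt_iff₀ ha).mpr this
      · by_cases hyM : Y ω ≤ x / M
        · left; right; exact ⟨hω, lt_of_not_ge hya, hyM⟩
        · right; exact lt_of_not_ge hyM
    have hsplit : μ {ω | x - t < X ω * Y ω} ≤
        (ENNReal.ofReal (F ((x - t) / a))
          + ENNReal.ofReal (C + ε / 2) * μ {ω | x < X ω * Y ω})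
          + ENNReal.ofReal (G (x / M)) := by
      refine le_trans (measure_mono hsub) ?_
      refine le_trans (measure_union_le _ _) ?_
      refine add_le_add (le_trans (measure_union_le _ _) (add_le_add ?_ ?_)) ?_
      · exact le_of_eq (ENNReal.ofReal_toReal (measure_ne_top μ _)).symm
      · exact tail_prod_middle' μ X Y hXm hYm hindep t s a M (C + ε / 2) x
          ha hM ht.le hta.le hCε20 hkeyM
      · exact le_of_eq (ENNReal.ofReal_toReal (measure_ne_top μ _)).symm
    have hlow : ENNReal.ofReal (F (x / b) * G b) ≤ μ {ω | x < X ω * Y ω} := by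
      have hl := rvTail_prod_lower' μ X Y hXm hYm hindep b x hb hx0
      calc ENNReal.ofReal (F (x / b) * G b) ≤ ENNReal.ofReal (Hb x) :=
            ENNReal.ofReal_le_ofReal hl
        _ = μ {ω | x < X ω * Y ω} := ENNReal.ofReal_toReal (measure_ne_top μ _)
    have hreal : F ((x - t) / a) + G (x / M) ≤ (ε / 2) * (F (x / b) * G b) := by
      calc F ((x - t) / a) + G (x / M) ≤ ε₁ * F (x / b) + ε₁ * F (x / b) :=
            add_le_add hx1 hx3
        _ = (ε / 2) * (F (x / b) * G b) := by rw [hε₁def]; ring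
    have htotal : μ {ω | x - t < X ω * Y ω} ≤
        ENNReal.ofReal (C + ε) * μ {ω | x < X ω * Y ω} := by
      calc μ {ω | x - t < X ω * Y ω}
          ≤ (ENNReal.ofReal (F ((x - t) / a))
              + ENNReal.ofReal (C + ε / 2) * μ {ω | x < X ω * Y ω})
              + ENNReal.ofReal (G (x / M)) := hsplit
        _ = ENNReal.ofReal (F ((x - t) / a) + G (x / M))
              + ENNReal.ofReal (C + ε / 2) * μ {ω | x < X ω * Y ω} := by
            rw [ENNReal.ofReal_add (rvTail_nonneg' μ _ _) (rvTail_nonneg' μ _ _)]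
            ring
        _ ≤ ENNReal.ofReal ((ε / 2) * (F (x / b) * G b))
              + ENNReal.ofReal (C + ε / 2) * μ {ω | x < X ω * Y ω} :=
            add_le_add_left (ENNReal.ofReal_le_ofReal hreal) _
        _ = ENNReal.ofReal (ε / 2) * ENNReal.ofReal (F (x / b) * G b)
              + ENNReal.ofReal (C + ε / 2) * μ {ω | x < X ω * Y ω} := by
            rw [ENNReal.ofReal_mul (by linarith)]
        _ ≤ ENNReal.ofReal (ε / 2) * μ {ω | x < X ω * Y ω}
              + ENNReal.ofReal (C + ε / 2) * μ {ω | x < X ω * Y ω} :=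
            add_le_add_left (mul_le_mul_right hlow _) _
        _ = (ENNReal.ofReal (ε / 2) + ENNReal.ofReal (C + ε / 2))
              * μ {ω | x < X ω * Y ω} := by ring
        _ = ENNReal.ofReal (C + ε) * μ {ω | x < X ω * Y ω} := by
            rw [← ENNReal.ofReal_add (by linarith) hCε20]
            ring_nf
    have hfin : ENNReal.ofReal (C + ε) * μ {ω | x < X ω * Y ω} ≠ ⊤ :=
      ENNReal.mul_ne_top ENNReal.ofReal_ne_top (measure_ne_top μ _)
    have := ENNReal.toReal_mono hfin htotal
    rw [ENNReal.toReal_mul, ENNReal.toReal_ofReal hCε0] at this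
    exact this
  -- consequences
  have hratio_ge1 : ∀ x, 1 ≤ Hb (x - t) / Hb x := fun x =>
    (one_le_div (hHpos x)).mpr (hHanti (by linarith))
  have hratio_nn : ∀ x, 0 ≤ Hb (x - t) / Hb x := fun x =>
    div_nonneg (rvTail_nonneg' μ _ _) (rvTail_nonneg' μ _ _)
  have hkey_ratio : ∀ s > (0:ℝ), ∀ ε > (0:ℝ),
      ∀ᶠ x in atTop, Hb (x - t) / Hb x ≤ Cstar F s + ε := by
    intro s hs ε hε
    filter_upwards [KEY s hs ε hε] with x hx
    exact (div_le_iff₀ (hHpos x)).mpr hx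
  have hHbdd : IsBoundedUnder (· ≤ ·) atTop (fun x => Hb (x - t) / Hb x) :=
    isBoundedUnder_of_eventually_le (hkey_ratio 1 one_pos 1 one_pos)
  have hCstarH_le : ∀ s > (0:ℝ), Cstar Hb t ≤ Cstar F s := by
    intro s hs
    refine le_of_forall_pos_le_add fun ε hε => ?_
    exact limsup_le_of_le
      (isCoboundedUnder_le_of_eventually_le atTop
        (Eventually.of_forall hratio_ge1))
      (hkey_ratio s hs ε hε)
  refine ⟨?_, ?_, ?_⟩
  · exact le_limsup_of_frequently_le ((Eventually.of_forall hratio_ge1).frequently) hHbdd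
  · refine le_csInf ⟨Cstar F 1, ⟨1, mem_Ioi.mpr one_pos, rfl⟩⟩ ?_
    rintro c ⟨s, hs, rfl⟩
    exact hCstarH_le s hs
  · have h1H : 1 ≤ Cflat Hb t :=
      le_liminf_of_le
        (isCoboundedUnder_ge_of_eventually_le atTop (hkey_ratio 1 one_pos 1 one_pos))
        (Eventually.of_forall hratio_ge1)
    refine le_trans ?_ h1H
    -- sInf (Cflat F '' Ioi 0) ≤ 1
    obtain ⟨L₀, hL₀⟩ := hFbd 1 one_pos
    rw [Filter.eventually_map] at hL₀
    set L : ℝ := max L₀ 1 with hLdef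
    have hL1 : 1 ≤ L := le_max_right _ _
    have hLev : ∀ᶠ x in atTop, F (x - 1) / F x ≤ L :=
      hL₀.mono fun x hx => le_trans hx (le_max_left _ _)
    have hbddB : BddBelow (Cflat F '' Ioi 0) := by
      refine ⟨0, ?_⟩
      rintro c ⟨s, hs, rfl⟩
      exact le_liminf_of_le
        ((hFbd s hs).isCoboundedUnder_ge)
        (Eventually.of_forall fun x => div_nonneg (hFpos _).le (hFpos _).le)
    refine le_of_forall_pos_le_add fun δ hδ => ?_
    obtain ⟨n₀, hn₀⟩ := pow_unbounded_of_one_lt L (show (1:ℝ) < 1 + δ by linarith)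
    set n : ℕ := max n₀ 1 with hndef
    have hn1 : 1 ≤ n := le_max_right _ _
    have hnR : (0:ℝ) < n := by exact_mod_cast hn1
    have hLn : L ≤ (1 + δ) ^ n := by
      refine le_trans hn₀.le (pow_le_pow_right₀ (by linarith) (le_max_left _ _))
    have h2 : L ^ ((n:ℝ)⁻¹) ≤ 1 + δ := by
      calc L ^ ((n:ℝ)⁻¹) ≤ ((1 + δ) ^ n) ^ ((n:ℝ)⁻¹) :=
            Real.rpow_le_rpow (by linarith) hLn (by positivity)
        _ = 1 + δ := by
            rw [← Real.rpow_natCast (1 + δ) n, ← Real.rpow_mul (by linarith),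
              mul_inv_cancel₀ hnR.ne', Real.rpow_one]
    calc sInf (Cflat F '' Ioi 0) ≤ Cflat F (1 / n) :=
          csInf_le hbddB ⟨1 / n, mem_Ioi.mpr (by positivity), rfl⟩
      _ ≤ L ^ ((n:ℝ)⁻¹) := Cflat_le_rpow' F hFpos L hL1 hLev n hn1
      _ ≤ 1 + δ := h2
end
end

section
/- Let α>0. Assume that e^{λ₁x^α}·F̄(x)→∞ as x→∞ for some λ₁>0, and that Ḡ(x)>0 for all x≥0. Then the product convolution H satisfies e^{λx^α}·H̄(x)→∞ as x→∞ for every λ>0. -/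
open MeasureTheory ProbabilityTheory Filter Topology Asymptotics Set

noncomputable section

theorem ProbabilityTheory.IndepFun.rvTail_mul_rvTail_le {Ω : Type*} [MeasurableSpace Ω] {μ : Measure Ω}
    [IsFiniteMeasure μ] {X Y : Ω → ℝ} (hXY : IndepFun X Y μ) {a b : ℝ} (ha : 0 ≤ a) (hb : 0 ≤ b) :
    rvTail μ X a * rvTail μ Y b ≤ rvTail μ (fun ω => X ω * Y ω) (a * b) := by
  have hsub : X ⁻¹' Ioi a ∩ Y ⁻¹' Ioi b ⊆ {ω | a * b < X ω * Y ω} :=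
    fun ω ⟨hX, hY⟩ => mul_lt_mul'' hX hY ha hb
  have hprod := hXY.measure_inter_preimage_eq_mul _ _
    (measurableSet_Ioi (a := a)) (measurableSet_Ioi (a := b))
  have := ENNReal.toReal_mono (measure_ne_top μ _) (measure_mono (μ := μ) hsub)
  rwa [hprod, ENNReal.toReal_mul] at this

theorem mul_div_rpow_le_mul_rpow {l₁ l c α x : ℝ} (hc : 0 < c) (hx : 0 ≤ x)
    (hlc : l₁ ≤ l * c ^ α) : l₁ * (x / c) ^ α ≤ l * x ^ α := by
  have hcα : 0 < c ^ α := Real.rpow_pos_of_pos hc α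
  rw [Real.div_rpow hx hc.le, mul_div_assoc', div_le_iff₀ hcα]
  calc l₁ * x ^ α ≤ l * c ^ α * x ^ α := mul_le_mul_of_nonneg_right hlc (Real.rpow_nonneg hx α)
    _ = l * x ^ α * c ^ α := by ring

theorem stmt_9_general {Ω : Type*} [MeasurableSpace Ω] (μ : Measure Ω) [IsProbabilityMeasure μ]
    (X Y : Ω → ℝ)
    (hindep : IndepFun X Y μ)
    (α : ℝ) (hα : 0 < α)
    (h1 : ∃ l₁ > (0:ℝ), Tendsto (fun x => Real.exp (l₁ * x ^ α) * rvTail μ X x) atTop atTop)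
    (hGpos : ∀ x ≥ (0:ℝ), 0 < rvTail μ Y x) :
    ∀ l > (0:ℝ),
      Tendsto (fun x => Real.exp (l * x ^ α) * rvTail μ (fun ω => X ω * Y ω) x)
        atTop atTop := by
  obtain ⟨l₁, -, hF⟩ := h1
  intro l hl
  -- Compare with the event {X > x/c, Y > c} for a fixed scale c with l c^α ≥ l₁.
  obtain ⟨c, hc, hlc⟩ : ∃ c > 0, l₁ ≤ l * c ^ α :=
    ((eventually_gt_atTop 0).and
      (((tendsto_rpow_atTop hα).const_mul_atTop hl).eventually_ge_atTop l₁)).exists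
  have hlower := (hF.comp (tendsto_id.atTop_div_const hc)).const_mul_atTop (hGpos c hc.le)
  refine tendsto_atTop_mono' atTop ?_ hlower
  filter_upwards [eventually_ge_atTop 0] with x hx
  have htail := hindep.rvTail_mul_rvTail_le (div_nonneg hx hc.le) hc.le
  rw [div_mul_cancel₀ x hc.ne'] at htail
  calc rvTail μ Y c * (Real.exp (l₁ * (x / c) ^ α) * rvTail μ X (x / c))
      = Real.exp (l₁ * (x / c) ^ α) * (rvTail μ X (x / c) * rvTail μ Y c) := by ring
    _ ≤ Real.exp (l * x ^ α) * rvTail μ (fun ω => X ω * Y ω) x := by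
      have hprod_nonneg : 0 ≤ rvTail μ X (x / c) * rvTail μ Y c := by unfold rvTail; positivity
      exact mul_le_mul (Real.exp_le_exp.mpr (mul_div_rpow_le_mul_rpow hc hx hlc)) htail
        hprod_nonneg (Real.exp_pos _).le

/-- if `e^{λ₁ x^α} F̄(x) → ∞` for some `λ₁ > 0` and `Ḡ > 0` on `[0,∞)`,
then `e^{λ x^α} H̄(x) → ∞` for every `λ > 0`. -/
theorem stmt_9 {Ω : Type*} [MeasurableSpace Ω] (μ : Measure Ω) [IsProbabilityMeasure μ]
    (X Y : Ω → ℝ) (hXm : Measurable X) (hYm : Measurable Y)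
    (hXnn : ∀ ω, 0 ≤ X ω) (hYnn : ∀ ω, 0 ≤ Y ω)
    (hindep : IndepFun X Y μ)
    (α : ℝ) (hα : 0 < α)
    (h1 : ∃ l₁ > (0:ℝ), Tendsto (fun x => Real.exp (l₁ * x ^ α) * rvTail μ X x) atTop atTop)
    (hGpos : ∀ x ≥ (0:ℝ), 0 < rvTail μ Y x) :
    ∀ l > (0:ℝ),
      Tendsto (fun x => Real.exp (l * x ^ α) * rvTail μ (fun ω => X ω * Y ω) x)
        atTop atTop :=
  stmt_9_general μ X Y hindep α hα h1 hGpos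
end
end

section
/- Let α>0. Assume that e^{λ₁x^α}·F̄(x)→∞ as x→∞ for some λ₁>0, and that Ḡ(x)>0 for all x≥0. Then for every distribution V satisfying e^{λ₀x^α}·V̄(x)→0 as x→∞ for some λ₀>0, and for every c>0, one has V̄(cx)=o(H̄(x)) as x→∞, where H is the product convolution of F and G. -/
/-! If `e^{λ₁ x^α} F̄(x) → ∞` then `F̄(x) ≥ e^{-λ₁ x^α}` eventually, and independence gives
`H̄(x) ≥ F̄(x/b) Ḡ(b) ≥ Ḡ(b) e^{-(λ₁/b^α) x^α}` for every `b > 0`, while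
`V̄(cx) = o(e^{-λ₀ c^α x^α})`. Choosing `b` so large that `λ₁/b^α ≤ λ₀ c^α` compares the two
Weibull-type rates. -/

open MeasureTheory ProbabilityTheory Filter Topology Asymptotics Set

noncomputable section

theorem rvTail_mul_rvTail_le_rvTail_mul {Ω : Type*} [MeasurableSpace Ω] {μ : Measure Ω}
    [IsFiniteMeasure μ] {X Y : Ω → ℝ} (hXY : IndepFun X Y μ) {s t : ℝ} (hs : 0 ≤ s)
    (ht : 0 ≤ t) :
    rvTail μ X s * rvTail μ Y t ≤ rvTail μ (fun ω => X ω * Y ω) (s * t) := by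
  have hsub : X ⁻¹' Ioi s ∩ Y ⁻¹' Ioi t ⊆ {ω | s * t < X ω * Y ω} :=
    fun ω ⟨hX, hY⟩ => mul_lt_mul'' hX hY hs ht
  calc rvTail μ X s * rvTail μ Y t = (μ (X ⁻¹' Ioi s ∩ Y ⁻¹' Ioi t)).toReal := by
        rw [hXY.measure_inter_preimage_eq_mul _ _ measurableSet_Ioi measurableSet_Ioi,
          ENNReal.toReal_mul]
        rfl
    _ ≤ rvTail μ (fun ω => X ω * Y ω) (s * t) :=
        ENNReal.toReal_mono (measure_ne_top μ _) (measure_mono hsub)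

theorem isLittleO_exp_neg_rpow_of_tendsto {v : ℝ → ℝ} {l α : ℝ}
    (hv : Tendsto (fun x => Real.exp (l * x ^ α) * v x) atTop (𝓝 0)) :
    v =o[atTop] fun x => Real.exp (-(l * x ^ α)) := by
  rw [isLittleO_iff_tendsto' (Eventually.of_forall fun x h => absurd h (Real.exp_pos _).ne')]
  simpa only [div_eq_mul_inv, Real.exp_neg, inv_inv, mul_comm] using hv

theorem exp_neg_rpow_le_of_tendsto_atTop {f : ℝ → ℝ} {l α : ℝ}
    (hf : Tendsto (fun x => Real.exp (l * x ^ α) * f x) atTop atTop) :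
    ∀ᶠ x in atTop, Real.exp (-(l * x ^ α)) ≤ f x := by
  filter_upwards [hf.eventually_ge_atTop 1] with x hx
  rwa [Real.exp_neg, inv_le_iff_one_le_mul₀ (Real.exp_pos _), mul_comm]

theorem exp_neg_rpow_comp_mul_eventuallyEq {l α c : ℝ} (hc : 0 ≤ c) :
    (fun x => Real.exp (-(l * (c * x) ^ α))) =ᶠ[atTop]
      fun x => Real.exp (-(l * c ^ α * x ^ α)) := by
  filter_upwards [eventually_ge_atTop 0] with x hx
  rw [Real.mul_rpow hc hx, mul_assoc]

theorem exp_neg_rpow_isBigO_of_le {l m α : ℝ} (hlm : l ≤ m) :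
    (fun x => Real.exp (-(m * x ^ α))) =O[atTop] fun x => Real.exp (-(l * x ^ α)) := by
  refine IsBigO.of_bound 1 ?_
  filter_upwards [eventually_ge_atTop 0] with x hx
  rw [one_mul, Real.norm_of_nonneg (Real.exp_pos _).le, Real.norm_of_nonneg (Real.exp_pos _).le,
    Real.exp_le_exp, neg_le_neg_iff]
  exact mul_le_mul_of_nonneg_right hlm (Real.rpow_nonneg hx α)

theorem exists_pos_div_rpow_le {α : ℝ} (hα : 0 < α) (l : ℝ) {m : ℝ} (hm : 0 < m) :
    ∃ b > 0, l / b ^ α ≤ m :=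
  ((eventually_gt_atTop 0).and
    ((tendsto_const_nhds.div_atTop (tendsto_rpow_atTop hα)).eventually_le_const hm)).exists

theorem exp_neg_rpow_isBigO_rvTail_mul {Ω : Type*} [MeasurableSpace Ω] {μ : Measure Ω}
    [IsFiniteMeasure μ] {X Y : Ω → ℝ} (hXY : IndepFun X Y μ) {l α b : ℝ}
    (hX : Tendsto (fun x => Real.exp (l * x ^ α) * rvTail μ X x) atTop atTop)
    (hb : 0 < b) (hYb : 0 < rvTail μ Y b) :
    (fun x => Real.exp (-(l / b ^ α * x ^ α))) =O[atTop] rvTail μ (fun ω => X ω * Y ω) := by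
  refine IsBigO.of_bound (rvTail μ Y b)⁻¹ ?_
  filter_upwards [(tendsto_id.atTop_div_const hb).eventually (exp_neg_rpow_le_of_tendsto_atTop hX),
    eventually_ge_atTop 0] with x hXx hx
  have hrate : l / b ^ α * x ^ α = l * (x / b) ^ α := by
    rw [Real.div_rpow hx hb.le]; ring
  have hH : 0 ≤ rvTail μ (fun ω => X ω * Y ω) x := ENNReal.toReal_nonneg
  rw [Real.norm_of_nonneg (Real.exp_pos _).le, Real.norm_of_nonneg hH, inv_mul_eq_div,
    le_div_iff₀ hYb, hrate]
  calc Real.exp (-(l * (x / b) ^ α)) * rvTail μ Y b ≤ rvTail μ X (x / b) * rvTail μ Y b :=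
        mul_le_mul_of_nonneg_right hXx hYb.le
    _ ≤ rvTail μ (fun ω => X ω * Y ω) x := by
        simpa only [div_mul_cancel₀ x hb.ne'] using
          rvTail_mul_rvTail_le_rvTail_mul hXY (div_nonneg hx hb.le) hb.le

theorem stmt_10_general {Ω : Type*} [MeasurableSpace Ω] (μ : Measure Ω) [IsProbabilityMeasure μ]
    (X Y : Ω → ℝ)
    (hindep : IndepFun X Y μ)
    (α : ℝ) (hα : 0 < α)
    (h1 : ∃ l₁ > (0:ℝ), Tendsto (fun x => Real.exp (l₁ * x ^ α) * rvTail μ X x) atTop atTop)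
    (hGpos : ∀ x ≥ (0:ℝ), 0 < rvTail μ Y x) :
    ∀ (V : Measure ℝ), IsProbabilityMeasure V →
      (∃ l₀ > (0:ℝ), Tendsto (fun x => Real.exp (l₀ * x ^ α) * mTail V x) atTop (𝓝 0)) →
      ∀ c > (0:ℝ),
        (fun x => mTail V (c * x)) =o[atTop] (rvTail μ (fun ω => X ω * Y ω)) := by
  intro V _ ⟨l₀, hl₀, hV⟩ c hc
  obtain ⟨l₁, -, hF⟩ := h1
  obtain ⟨b, hb, hbα⟩ := exists_pos_div_rpow_le hα l₁ (by positivity : 0 < l₀ * c ^ α)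
  have hVc : (fun x => mTail V (c * x)) =o[atTop] fun x => Real.exp (-(l₀ * c ^ α * x ^ α)) :=
    ((isLittleO_exp_neg_rpow_of_tendsto hV).comp_tendsto
      (tendsto_id.const_mul_atTop hc)).trans_eventuallyEq
      (exp_neg_rpow_comp_mul_eventuallyEq hc.le)
  exact (hVc.trans_isBigO (exp_neg_rpow_isBigO_of_le hbα)).trans_isBigO
    (exp_neg_rpow_isBigO_rvTail_mul hindep hF hb (hGpos b hb.le))

/-- if `e^{λ₁ x^α} F̄(x) → ∞` for some `λ₁ > 0` and `Ḡ > 0` on `[0,∞)`,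
then for every distribution `V` with `e^{λ₀ x^α} V̄(x) → 0` for some `λ₀ > 0`, and every
`c > 0`, `V̄(cx) = o(H̄(x))`. -/
theorem stmt_10 {Ω : Type*} [MeasurableSpace Ω] (μ : Measure Ω) [IsProbabilityMeasure μ]
    (X Y : Ω → ℝ) (hXm : Measurable X) (hYm : Measurable Y)
    (hXnn : ∀ ω, 0 ≤ X ω) (hYnn : ∀ ω, 0 ≤ Y ω)
    (hindep : IndepFun X Y μ)
    (α : ℝ) (hα : 0 < α)
    (h1 : ∃ l₁ > (0:ℝ), Tendsto (fun x => Real.exp (l₁ * x ^ α) * rvTail μ X x) atTop atTop)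
    (hGpos : ∀ x ≥ (0:ℝ), 0 < rvTail μ Y x) :
    ∀ (V : Measure ℝ), IsProbabilityMeasure V →
      (∃ l₀ > (0:ℝ), Tendsto (fun x => Real.exp (l₀ * x ^ α) * mTail V x) atTop (𝓝 0)) →
      ∀ c > (0:ℝ),
        (fun x => mTail V (c * x)) =o[atTop] (rvTail μ (fun ω => X ω * Y ω)) :=
  stmt_10_general μ X Y hindep α hα h1 hGpos
end
end

section
/- Assume that for each c>0, max{F̄(cx),Ḡ(cx)}=o(H̄(x)) as x→∞, where H is the product convolution of F and G, and assume in addition that F belongs to the generalized long-tailed class 𝒪ℒ. Then there exist functions b₁,b₂:[0,∞)→(0,∞) with bᵢ(x) nondecreasing to ∞ and bᵢ(x)/x nonincreasing to 0 (i=1,2) and b₁(x)=o(x/b₂(x)), such that H̄(x−t) ∼ ∫_{(b₁(x), x/b₂(x)]} F̄((x−t)/y) G(dy) as x→∞, uniformly for all t with 0<t≤b₁(x), i.e., sup_{0<t≤b₁(x)} | H̄(x−t) / ∫_{(b₁(x), x/b₂(x)]} F̄((x−t)/y) G(dy) − 1 | → 0. -/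
open MeasureTheory ProbabilityTheory Filter Topology Asymptotics Set

noncomputable section

lemma aux_diag (z : ℕ → ℝ) :
    ∃ b : ℝ → ℝ, (∀ x, 1 ≤ b x) ∧ Monotone b ∧
      (∀ u v : ℝ, 0 < u → u ≤ v → b v / v ≤ b u / u) ∧
      Tendsto b atTop atTop ∧ Tendsto (fun x => b x / x) atTop (𝓝 0) ∧
      ∀ N : ℕ, ∀ᶠ x in atTop, ∃ n : ℕ, N ≤ n ∧ b x ≤ (n : ℝ) + 1 ∧ z n ≤ x ∧
        ((n : ℝ) + 1) * ((n : ℝ) + 2) ≤ x := by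
  classical
  set w : ℕ → ℝ := fun n =>
    Nat.rec (max (z 1) 6) (fun k wk => max (z (k + 2)) (max (((k : ℝ) + 3) * ((k : ℝ) + 4)) (wk + 1))) n
    with hw
  have hw0 : w 0 = max (z 1) 6 := rfl
  have hwsucc : ∀ k, w (k + 1) = max (z (k + 2)) (max (((k : ℝ) + 3) * ((k : ℝ) + 4)) (w k + 1)) :=
    fun k => rfl
  have hwz : ∀ k : ℕ, z (k + 1) ≤ w k := by
    intro k
    cases k with
    | zero => exact le_max_left _ _
    | succ m => rw [hwsucc m]; exact le_max_left _ _
  have hwq : ∀ k : ℕ, ((k : ℝ) + 2) * ((k : ℝ) + 3) ≤ w k := by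
    intro k
    cases k with
    | zero => rw [hw0]; norm_num
    | succ m =>
      rw [hwsucc m]
      refine le_trans ?_ (le_max_of_le_right (le_max_left _ _))
      push_cast; nlinarith [Nat.cast_nonneg (α := ℝ) m]
  have hw6 : ∀ k : ℕ, 6 ≤ w k := by
    intro k
    refine le_trans ?_ (hwq k)
    nlinarith [Nat.cast_nonneg (α := ℝ) k]
  have hwpos : ∀ k, 0 < w k := fun k => lt_of_lt_of_le (by norm_num) (hw6 k)
  have hwstep : ∀ k, w k + 1 ≤ w (k + 1) := by
    intro k; rw [hwsucc k]; exact le_max_of_le_right (le_max_right _ _)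
  have hwmono : Monotone w :=
    monotone_nat_of_le_succ fun k => le_trans (by linarith) (hwstep k)
  have hwk : ∀ k : ℕ, (k : ℝ) ≤ w k := by
    intro k
    induction k with
    | zero => simpa using le_trans (by norm_num) (hw6 0)
    | succ m ih => push_cast; linarith [hwstep m]
  set T : ℕ → ℝ → ℝ := fun n x => max ((n : ℝ) + 1) (x / w n) with hT
  have hT1 : ∀ n x, (1 : ℝ) ≤ T n x := by
    intro n x
    exact le_max_of_le_left (by linarith [Nat.cast_nonneg (α := ℝ) n])
  have bdd : ∀ x, BddBelow (Set.range fun n => T n x) := by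
    intro x
    exact ⟨1, by rintro v ⟨n, rfl⟩; exact hT1 n x⟩
  set b : ℝ → ℝ := fun x => ⨅ n, T n x with hb
  have h1 : ∀ x, 1 ≤ b x := fun x => le_ciInf fun n => hT1 n x
  have hble : ∀ x n, b x ≤ T n x := fun x n => ciInf_le (bdd x) n
  have hmono : Monotone b := by
    intro x y hxy
    refine le_ciInf fun n => (hble x n).trans (max_le_max le_rfl ?_)
    exact div_le_div_of_nonneg_right hxy (hwpos n).le
  have hratio : ∀ u v : ℝ, 0 < u → u ≤ v → b v / v ≤ b u / u := by
    intro u v hu huv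
    have hv : 0 < v := hu.trans_le huv
    have hvu : (1 : ℝ) ≤ v / u := (one_le_div hu).2 huv
    have key : b v ≤ (v / u) * b u := by
      refine le_of_forall_pos_le_add ?_
      intro ε hε
      have hvu0 : 0 < v / u := by positivity
      have hε' : 0 < ε / (v / u) := by positivity
      obtain ⟨tn, htn⟩ := exists_lt_of_ciInf_lt (show b u < b u + ε / (v / u) by linarith)
      have h2 : T tn v ≤ (v / u) * T tn u := by
        rw [hT, mul_max_of_nonneg _ _ hvu0.le]
        apply max_le_max
        · nlinarith [Nat.cast_nonneg (α := ℝ) tn]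
        · have : v / u * (u / w tn) = v / w tn := by
            field_simp
          rw [this]
      calc b v ≤ T tn v := hble v tn
        _ ≤ (v / u) * T tn u := h2
        _ ≤ (v / u) * (b u + ε / (v / u)) :=
            mul_le_mul_of_nonneg_left htn.le hvu0.le
        _ = (v / u) * b u + ε := by field_simp
    rw [div_le_div_iff₀ hv hu]
    calc b v * u ≤ ((v / u) * b u) * u := mul_le_mul_of_nonneg_right key hu.le
      _ = b u * v := by field_simp
  have htop : Tendsto b atTop atTop := by
    rw [tendsto_atTop]
    intro C
    set N := Nat.ceil (max C 0) with hN
    filter_upwards [eventually_ge_atTop (((N : ℝ) + 1) * w N)] with x hx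
    have hx0 : 0 ≤ x := le_trans (by nlinarith [hwpos N, Nat.cast_nonneg (α := ℝ) N]) hx
    have hTN : ∀ n, ((N : ℝ) + 1) ≤ T n x := by
      intro n
      rcases le_or_gt N n with h | h
      · exact le_max_of_le_left (by push_cast; exact_mod_cast add_le_add (Nat.cast_le.2 h) le_rfl)
      · refine le_max_of_le_right ?_
        have h1 : ((N : ℝ) + 1) ≤ x / w N := (le_div_iff₀ (hwpos N)).2 (by linarith)
        have h2 : x / w N ≤ x / w n :=
          div_le_div_of_nonneg_left hx0 (hwpos n) (hwmono h.le)
        linarith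
    have : ((N : ℝ) + 1) ≤ b x := le_ciInf hTN
    have hCN : C ≤ (N : ℝ) := le_trans (le_max_left _ _) (Nat.le_ceil _)
    linarith
  have hzero : Tendsto (fun x => b x / x) atTop (𝓝 0) := by
    rw [Metric.tendsto_atTop]
    intro ε hε
    set n := Nat.ceil (2 / ε) with hn
    have hwn : 1 / w n ≤ ε / 2 := by
      have h2 : 2 / ε ≤ w n := le_trans (Nat.le_ceil _) (hwk n)
      have h4 : ε * (2 / ε) = 2 := by field_simp
      rw [div_le_div_iff₀ (hwpos n) (by norm_num : (0:ℝ) < 2)]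
      nlinarith [mul_le_mul_of_nonneg_left h2 hε.le]
    refine ⟨max 1 (((n : ℝ) + 1) / (ε / 2)), fun x hx => ?_⟩
    have hx1 : (1 : ℝ) ≤ x := le_trans (le_max_left _ _) hx
    have hx0 : 0 < x := by linarith
    have hxne : x ≠ 0 := ne_of_gt hx0
    have hwne : w n ≠ 0 := ne_of_gt (hwpos n)
    have hbx : b x / x ≤ max (((n : ℝ) + 1) / x) (1 / w n) := by
      have h1 : b x / x ≤ T n x / x := div_le_div_of_nonneg_right (hble x n) hx0.le
      have hTnx : T n x = max ((n : ℝ) + 1) (x / w n) := rfl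
      have hxx : x / w n / x = 1 / w n := by field_simp
      have h2 : T n x / x = max (((n : ℝ) + 1) / x) (1 / w n) := by
        rw [hTnx, ← max_div_div_right hx0.le, hxx]
      exact h1.trans_eq h2
    have hnx : ((n : ℝ) + 1) / x ≤ ε / 2 := by
      rw [div_le_iff₀ hx0]
      have h3 : ((n : ℝ) + 1) / (ε / 2) ≤ x := le_trans (le_max_right _ _) hx
      have h4 : ((n : ℝ) + 1) = (((n : ℝ) + 1) / (ε / 2)) * (ε / 2) := by field_simp
      nlinarith [mul_le_mul_of_nonneg_right h3 (le_of_lt (half_pos hε))]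
    have hbge : 0 ≤ b x / x := div_nonneg (zero_le_one.trans (h1 x)) hx0.le
    have : b x / x ≤ ε / 2 := hbx.trans (max_le hnx hwn)
    rw [Real.dist_eq, sub_zero, abs_of_nonneg hbge]
    linarith
  refine ⟨b, h1, hmono, hratio, htop, hzero, ?_⟩
  intro N
  filter_upwards [eventually_gt_atTop (((N : ℝ) + 1) * w N), eventually_ge_atTop 0] with x hx hx0
  have hex : ∃ m : ℕ, x ≤ ((m : ℝ) + 1) * w m := by
    refine ⟨Nat.ceil x, ?_⟩
    have h1 : x ≤ (Nat.ceil x : ℝ) := Nat.le_ceil x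
    have h2 : (Nat.ceil x : ℝ) ≤ w (Nat.ceil x) := hwk _
    nlinarith [hwpos (Nat.ceil x), Nat.cast_nonneg (α := ℝ) (Nat.ceil x)]
  set n := Nat.find hex with hnn
  have hnsp : x ≤ ((n : ℝ) + 1) * w n := Nat.find_spec hex
  have hNn : N < n := by
    by_contra h
    push_neg at h
    have hcast : ((n : ℝ) + 1) ≤ ((N : ℝ) + 1) := by
      have := (Nat.cast_le (α := ℝ)).2 h; linarith
    have : ((n : ℝ) + 1) * w n ≤ ((N : ℝ) + 1) * w N :=
      mul_le_mul hcast (hwmono h) (hwpos n).le (by positivity)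
    linarith
  obtain ⟨m, hm⟩ : ∃ m, n = m + 1 := ⟨n - 1, (Nat.succ_pred_eq_of_pos (Nat.pos_of_ne_zero (by omega))).symm⟩
  have hmin : ((m : ℝ) + 1) * w m < x := by
    have := Nat.find_min hex (m := m) (by omega)
    push_neg at this
    exact this
  have hwmx : w m < x := by
    nlinarith [hwpos m, Nat.cast_nonneg (α := ℝ) m]
  refine ⟨n, hNn.le, ?_, ?_, ?_⟩
  · refine (hble x n).trans (max_le le_rfl ?_)
    rw [div_le_iff₀ (hwpos n)]
    linarith [hnsp]
  · have := hwz m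
    rw [hm]
    have hz2 : z (m + 1) ≤ w m := hwz m
    linarith
  · have hq : ((m : ℝ) + 2) * ((m : ℝ) + 3) ≤ w m := hwq m
    rw [hm]
    push_cast
    nlinarith


lemma aux_g :
    ∃ g : ℝ → ℝ, (∀ x, 1 ≤ g x) ∧ Monotone g ∧
      (∀ u v : ℝ, 0 < u → u ≤ v → g v / v ≤ g u / u) ∧
      Tendsto g atTop atTop ∧ Tendsto (fun x => g x / x) atTop (𝓝 0) ∧
      ∀ c > (0:ℝ), ∀ᶠ x in atTop, g x * g x ≤ c * x := by
  set g : ℝ → ℝ := fun x => (max 1 x) ^ ((1:ℝ)/3) with hg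
  have hbase : ∀ x : ℝ, (0:ℝ) < max 1 x := fun x => lt_of_lt_of_le one_pos (le_max_left _ _)
  have h1 : ∀ x, 1 ≤ g x := by
    intro x
    have h := Real.rpow_le_rpow (by norm_num : (0:ℝ) ≤ 1) (le_max_left 1 x) (by norm_num : (0:ℝ) ≤ 1/3)
    rw [Real.one_rpow] at h
    exact h
  have hmono : Monotone g := by
    intro u v huv
    exact Real.rpow_le_rpow (hbase u).le (max_le_max le_rfl huv) (by norm_num)
  have hval : ∀ x : ℝ, 1 ≤ x → g x = x ^ ((1:ℝ)/3) := by
    intro x hx; rw [hg]; simp only []; rw [max_eq_right hx]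
  have hgd : ∀ v : ℝ, 1 ≤ v → g v / v = v ^ (-(2:ℝ)/3) := by
    intro v hv
    have hv0 : 0 < v := lt_of_lt_of_le one_pos hv
    rw [hval v hv]
    rw [show v ^ ((1:ℝ)/3) / v = v ^ ((1:ℝ)/3) / v ^ (1:ℝ) by rw [Real.rpow_one]]
    rw [← Real.rpow_sub hv0]
    norm_num
  have hratio : ∀ u v : ℝ, 0 < u → u ≤ v → g v / v ≤ g u / u := by
    intro u v hu huv
    have hv : 0 < v := hu.trans_le huv
    rcases le_or_gt v 1 with hv1 | hv1
    · have hu1 : u ≤ 1 := huv.trans hv1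
      have : g u = 1 := by rw [hg]; simp only []; rw [max_eq_left hu1, Real.one_rpow]
      have hv' : g v = 1 := by rw [hg]; simp only []; rw [max_eq_left hv1, Real.one_rpow]
      rw [this, hv']
      exact one_div_le_one_div_of_le hu huv
    · rw [hgd v hv1.le]
      rcases le_or_gt u 1 with hu1 | hu1
      · have hgu : g u = 1 := by rw [hg]; simp only []; rw [max_eq_left hu1, Real.one_rpow]
        rw [hgu]
        have h2 : v ^ (-(2:ℝ)/3) ≤ 1 :=
          Real.rpow_le_one_of_one_le_of_nonpos hv1.le (by norm_num)
        have h3 : (1:ℝ) ≤ 1 / u := by rw [le_div_iff₀ hu]; linarith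
        linarith
      · rw [hgd u hu1.le]
        have h2 : u ^ ((2:ℝ)/3) ≤ v ^ ((2:ℝ)/3) :=
          Real.rpow_le_rpow (by linarith) huv (by norm_num)
        have hup : 0 < u ^ ((2:ℝ)/3) := Real.rpow_pos_of_pos hu _
        have h3 : (v ^ ((2:ℝ)/3))⁻¹ ≤ (u ^ ((2:ℝ)/3))⁻¹ := inv_anti₀ hup h2
        rw [show (-(2:ℝ)/3) = -((2:ℝ)/3) by norm_num, Real.rpow_neg hv.le, Real.rpow_neg hu.le]
        exact h3
  have htop : Tendsto g atTop atTop := by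
    have h2 : Tendsto (fun x : ℝ => max 1 x) atTop atTop :=
      tendsto_atTop_mono (fun x => le_max_right 1 x) tendsto_id
    exact (tendsto_rpow_atTop (by norm_num : (0:ℝ) < 1/3)).comp h2
  have hzero : Tendsto (fun x => g x / x) atTop (𝓝 0) := by
    have h0 : Tendsto (fun x : ℝ => x ^ (-(2:ℝ)/3)) atTop (𝓝 0) := by
      have := tendsto_rpow_neg_atTop (by norm_num : (0:ℝ) < 2/3)
      simpa [neg_div] using this
    apply h0.congr'
    filter_upwards [eventually_ge_atTop 1] with x hx
    exact (hgd x hx).symm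
  refine ⟨g, h1, hmono, hratio, htop, hzero, ?_⟩
  intro c hc
  have h0 : Tendsto (fun x : ℝ => x ^ (-(1:ℝ)/3)) atTop (𝓝 0) := by
    have := tendsto_rpow_neg_atTop (by norm_num : (0:ℝ) < 1/3)
    simpa [neg_div] using this
  filter_upwards [eventually_ge_atTop 1, h0.eventually (ge_mem_nhds hc)] with x hx1 hxc
  have hx0 : 0 < x := lt_of_lt_of_le one_pos hx1
  have e2 : g x * g x = x * x ^ (-(1:ℝ)/3) := by
    rw [hval x hx1, ← Real.rpow_add hx0,
      show ((1:ℝ)/3 + 1/3) = 1 + (-(1:ℝ)/3) by norm_num,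
      Real.rpow_add hx0, Real.rpow_one]
  rw [e2]
  calc x * x ^ (-(1:ℝ)/3) ≤ x * c := mul_le_mul_of_nonneg_left hxc hx0.le
    _ = c * x := mul_comm _ _

lemma aux_prodtail {Ω : Type*} [MeasurableSpace Ω] (μ : Measure Ω) [IsProbabilityMeasure μ]
    (X Y : Ω → ℝ) (hXm : Measurable X) (hYm : Measurable Y)
    (hXnn : ∀ ω, 0 ≤ X ω) (hindep : IndepFun X Y μ) {s : ℝ} (hs : 0 < s) :
    μ {ω | s < X ω * Y ω} =
      ∫⁻ y in Ioi (0:ℝ), Measure.map X μ (Ioi (s / y)) ∂(Measure.map Y μ) := by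
  have hmap : Measure.map (fun ω => (X ω, Y ω)) μ = (Measure.map X μ).prod (Measure.map Y μ) :=
    (indepFun_iff_map_prod_eq_prod_map_map hXm.aemeasurable hYm.aemeasurable).1 hindep
  have hSm : MeasurableSet {p : ℝ × ℝ | s < p.1 * p.2} :=
    measurableSet_lt measurable_const (measurable_fst.mul measurable_snd)
  have h1 : μ {ω | s < X ω * Y ω}
      = Measure.map (fun ω => (X ω, Y ω)) μ {p : ℝ × ℝ | s < p.1 * p.2} := by
    rw [Measure.map_apply (hXm.prodMk hYm) hSm]
    rfl
  rw [h1, hmap, Measure.prod_apply_symm hSm]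
  have hρ0 : Measure.map X μ {a : ℝ | a < 0} = 0 := by
    rw [show {a : ℝ | a < 0} = Iio (0:ℝ) from rfl, Measure.map_apply hXm measurableSet_Iio]
    have : X ⁻¹' Iio (0:ℝ) = ∅ := by
      ext ω; simp [mem_Iio, not_lt.2 (hXnn ω)]
    rw [this, measure_empty]
  have key : (∫⁻ y, Measure.map X μ ((fun x => (x, y)) ⁻¹' {p : ℝ × ℝ | s < p.1 * p.2})
        ∂(Measure.map Y μ))
      = ∫⁻ y in Ioi (0:ℝ), Measure.map X μ (Ioi (s / y)) ∂(Measure.map Y μ) := by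
    rw [← lintegral_add_compl
      (fun y => Measure.map X μ ((fun x => (x, y)) ⁻¹' {p : ℝ × ℝ | s < p.1 * p.2}))
      (measurableSet_Iic (a := (0:ℝ)))]
    have hzero : (∫⁻ y in Iic (0:ℝ),
        Measure.map X μ ((fun x => (x, y)) ⁻¹' {p : ℝ × ℝ | s < p.1 * p.2})
        ∂(Measure.map Y μ)) = 0 := by
      have heq : ∀ y ∈ Iic (0:ℝ),
          Measure.map X μ ((fun x => (x, y)) ⁻¹' {p : ℝ × ℝ | s < p.1 * p.2}) = 0 := by
        intro y hy
        refine le_antisymm (le_trans (measure_mono ?_) hρ0.le) zero_le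
        intro a ha
        simp only [mem_preimage, mem_setOf_eq] at ha ⊢
        by_contra hcon
        push_neg at hcon
        have : a * y ≤ 0 := mul_nonpos_of_nonneg_of_nonpos hcon hy
        linarith
      rw [setLIntegral_congr_fun measurableSet_Iic heq]
      simp
    rw [hzero, zero_add, compl_Iic]
    refine setLIntegral_congr_fun measurableSet_Ioi ?_
    intro y hy
    have hy0 : 0 < y := hy
    refine congrArg (fun S => Measure.map X μ S) ?_
    ext a
    simp only [mem_preimage, mem_setOf_eq, mem_Ioi]
    rw [div_lt_iff₀ hy0]
  exact key

set_option maxHeartbeats 1600000 in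
/-- if `max{F̄(cx), Ḡ(cx)} = o(H̄(x))` for each `c > 0` and `F ∈ 𝒪ℒ`,
then there exist functions `b₁, b₂` as in Statement 11 such that, uniformly in
`0 < t ≤ b₁(x)`, `H̄(x−t) ∼ ∫_{(b₁(x), x/b₂(x)]} F̄((x−t)/y) G(dy)`. -/
theorem stmt_12 {Ω : Type*} [MeasurableSpace Ω] (μ : Measure Ω) [IsProbabilityMeasure μ]
    (X Y : Ω → ℝ) (hXm : Measurable X) (hYm : Measurable Y)
    (hXnn : ∀ ω, 0 ≤ X ω) (hYnn : ∀ ω, 0 ≤ Y ω)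
    (hindep : IndepFun X Y μ)
    (hsmall : ∀ c > (0:ℝ),
      (fun x => max (rvTail μ X (c * x)) (rvTail μ Y (c * x)))
        =o[atTop] (rvTail μ (fun ω => X ω * Y ω)))
    (hFOL : IsOL (rvTail μ X)) :
    ∃ b₁ b₂ : ℝ → ℝ,
      (∀ x, 0 < b₁ x) ∧ (∀ x, 0 < b₂ x) ∧
      MonotoneOn b₁ (Ici 0) ∧ MonotoneOn b₂ (Ici 0) ∧
      Tendsto b₁ atTop atTop ∧ Tendsto b₂ atTop atTop ∧
      AntitoneOn (fun x => b₁ x / x) (Ioi 0) ∧ AntitoneOn (fun x => b₂ x / x) (Ioi 0) ∧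
      Tendsto (fun x => b₁ x / x) atTop (𝓝 0) ∧ Tendsto (fun x => b₂ x / x) atTop (𝓝 0) ∧
      b₁ =o[atTop] (fun x => x / b₂ x) ∧
      ∀ ε > (0:ℝ), ∀ᶠ x in atTop, ∀ t, 0 < t → t ≤ b₁ x →
        |rvTail μ (fun ω => X ω * Y ω) (x - t) /
            (∫ y in Ioc (b₁ x) (x / b₂ x), rvTail μ X ((x - t) / y) ∂(Measure.map Y μ))
          - 1| ≤ ε := by
  classical
  set ρ := Measure.map X μ with hρ
  set ν := Measure.map Y μ with hν
  haveI hρP : IsProbabilityMeasure ρ := Measure.isProbabilityMeasure_map hXm.aemeasurable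
  haveI hνP : IsProbabilityMeasure ν := Measure.isProbabilityMeasure_map hYm.aemeasurable
  set Fb := rvTail μ X with hFb
  set Gb := rvTail μ Y with hGb
  set Hb := rvTail μ (fun ω => X ω * Y ω) with hHb
  have hFeq : ∀ u : ℝ, Fb u = (ρ (Ioi u)).toReal := by
    intro u
    rw [hFb, hρ]
    simp only [rvTail]
    rw [Measure.map_apply hXm measurableSet_Ioi]
    rfl
  have hGeq : ∀ u : ℝ, Gb u = (ν (Ioi u)).toReal := by
    intro u
    rw [hGb, hν]
    simp only [rvTail]
    rw [Measure.map_apply hYm measurableSet_Ioi]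
    rfl
  have hFnn : ∀ u, 0 ≤ Fb u := fun u => ENNReal.toReal_nonneg
  have hGnn : ∀ u, 0 ≤ Gb u := fun u => ENNReal.toReal_nonneg
  have hHnn : ∀ u, 0 ≤ Hb u := fun u => ENNReal.toReal_nonneg
  have hFanti : Antitone Fb := by
    intro u v huv
    simp only [hFb, rvTail]
    exact ENNReal.toReal_mono (measure_ne_top μ _)
      (measure_mono (fun ω hω => lt_of_le_of_lt huv hω))
  have hGanti : Antitone Gb := by
    intro u v huv
    simp only [hGb, rvTail]
    exact ENNReal.toReal_mono (measure_ne_top μ _)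
      (measure_mono (fun ω hω => lt_of_le_of_lt huv hω))
  -- thresholds
  have hz : ∀ n : ℕ, ∃ zn : ℝ, ∀ x ≥ zn,
      Fb (x / ((n:ℝ)+2)) ≤ Hb x / (2*((n:ℝ)+1)) ∧ Gb (x / ((n:ℝ)+2)) ≤ Hb x / (2*((n:ℝ)+1)) := by
    intro n
    have hc : (0:ℝ) < 1/((n:ℝ)+2) := by positivity
    have h := (hsmall _ hc).def (show (0:ℝ) < 1/(2*((n:ℝ)+1)) by positivity)
    rw [eventually_atTop] at h
    obtain ⟨a, ha⟩ := h
    refine ⟨a, fun x hx => ?_⟩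
    have h2 := ha x hx
    have hxeq : 1/((n:ℝ)+2) * x = x/((n:ℝ)+2) := by ring
    rw [Real.norm_eq_abs, Real.norm_eq_abs, hxeq,
      abs_of_nonneg (le_trans (hFnn _) (le_max_left _ _)), abs_of_nonneg (hHnn x)] at h2
    have heq : 1/(2*((n:ℝ)+1)) * Hb x = Hb x / (2*((n:ℝ)+1)) := by ring
    rw [heq] at h2
    exact ⟨le_trans (le_max_left _ _) h2, le_trans (le_max_right _ _) h2⟩
  choose z hzspec using hz
  obtain ⟨b, hb1, hbmono, hbratio, hbtop, hbzero, hbdiag⟩ := aux_diag z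
  obtain ⟨g, hg1, hgmono, hgratio, hgtop, hgzero, hgsq⟩ := aux_g
  set B := fun x => min (b x) (g x) with hB
  have hB1 : ∀ x, 1 ≤ B x := fun x => le_min (hb1 x) (hg1 x)
  have hBpos : ∀ x, 0 < B x := fun x => lt_of_lt_of_le one_pos (hB1 x)
  have hBmono : Monotone B := fun u v h => min_le_min (hbmono h) (hgmono h)
  have hBtop : Tendsto B atTop atTop := by
    rw [tendsto_atTop]
    intro C
    filter_upwards [(tendsto_atTop.1 hbtop) C, (tendsto_atTop.1 hgtop) C] with x h1 h2
    exact le_min h1 h2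
  have hBratio : ∀ u v : ℝ, 0 < u → u ≤ v → B v / v ≤ B u / u := by
    intro u v hu huv
    have hv : 0 < v := hu.trans_le huv
    have e1 : B v / v = min (b v / v) (g v / v) := by
      rw [hB]; exact (min_div_div_right hv.le _ _).symm
    have e2 : B u / u = min (b u / u) (g u / u) := by
      rw [hB]; exact (min_div_div_right hu.le _ _).symm
    rw [e1, e2]
    exact min_le_min (hbratio u v hu huv) (hgratio u v hu huv)
  have hBzero : Tendsto (fun x => B x / x) atTop (𝓝 0) := by
    apply squeeze_zero' (g := fun x => g x / x)
    · filter_upwards [eventually_ge_atTop 1] with x hx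
      exact div_nonneg (zero_le_one.trans (hB1 x)) (zero_le_one.trans hx)
    · filter_upwards [eventually_ge_atTop 1] with x hx
      exact div_le_div_of_nonneg_right (min_le_right _ _) (by linarith)
    · exact hgzero
  -- smallb
  have smallb : ∀ δ : ℝ, 0 < δ → ∀ᶠ x in atTop,
      Fb (x / b x - 1) + Gb (x / b x) ≤ δ * Hb x := by
    intro δ hδ
    set N := Nat.ceil (1/δ) with hNdef
    have hNδ : 1/((N:ℝ)+1) ≤ δ := by
      have h1 : 1/δ ≤ (N:ℝ) := Nat.le_ceil _
      rw [div_le_iff₀ (by positivity : (0:ℝ) < (N:ℝ)+1)]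
      have h2 : (1:ℝ) = δ * (1/δ) := by field_simp
      nlinarith
    filter_upwards [hbdiag N, eventually_gt_atTop 0] with x hx hx0
    obtain ⟨n, hNn, hbn, hzn, hq⟩ := hx
    have hbpos : 0 < b x := lt_of_lt_of_le one_pos (hb1 x)
    have h5 : x / ((n:ℝ)+1) ≤ x / b x := div_le_div_of_nonneg_left hx0.le hbpos hbn
    have h6 : x / ((n:ℝ)+2) ≤ x / ((n:ℝ)+1) - 1 := by
      have e : x/((n:ℝ)+1) - x/((n:ℝ)+2) = x/(((n:ℝ)+1)*((n:ℝ)+2)) := by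
        field_simp
        ring
      have h7 : (1:ℝ) ≤ x/(((n:ℝ)+1)*((n:ℝ)+2)) := (one_le_div (by positivity)).2 hq
      linarith
    have h7 : x / ((n:ℝ)+2) ≤ x / b x - 1 := by linarith
    have hxn2 : 0 ≤ x / ((n:ℝ)+2) := by positivity
    have h8 : x / ((n:ℝ)+2) ≤ x / b x := by linarith
    obtain ⟨hzF, hzG⟩ := hzspec n x hzn
    have hsum : Fb (x/b x - 1) + Gb (x/b x)
        ≤ Hb x/(2*((n:ℝ)+1)) + Hb x/(2*((n:ℝ)+1)) :=
      add_le_add ((hFanti h7).trans hzF) ((hGanti h8).trans hzG)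
    have heq2 : Hb x/(2*((n:ℝ)+1)) + Hb x/(2*((n:ℝ)+1)) = Hb x * (1/((n:ℝ)+1)) := by
      field_simp
      ring
    have h9 : (1:ℝ)/((n:ℝ)+1) ≤ 1/((N:ℝ)+1) := by
      apply one_div_le_one_div_of_le (by positivity)
      have := (Nat.cast_le (α := ℝ)).2 hNn
      linarith
    calc Fb (x/b x - 1) + Gb (x/b x) ≤ Hb x * (1/((n:ℝ)+1)) := by rw [← heq2]; exact hsum
      _ ≤ Hb x * δ := mul_le_mul_of_nonneg_left (h9.trans hNδ) (hHnn x)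
      _ = δ * Hb x := mul_comm _ _
  -- positivity of H eventually
  have hHpos : ∀ᶠ x in atTop, 0 < Hb x := by
    have h := (hsmall 1 one_pos).def (show (0:ℝ) < 1/2 by norm_num)
    filter_upwards [h] with x hx
    have hF := hFOL.1 (1*x)
    have hmax : (0:ℝ) < max (Fb (1*x)) (Gb (1*x)) := lt_of_lt_of_le hF (le_max_left _ _)
    by_contra hcon
    push_neg at hcon
    rw [Real.norm_eq_abs, Real.norm_eq_abs, abs_of_nonneg hmax.le, abs_of_nonneg (hHnn x)] at hx
    nlinarith
  have hmeas0 : Measurable (fun u : ℝ => ρ (Ioi u)) := by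
    apply Antitone.measurable
    intro u v huv
    exact measure_mono (Ioi_subset_Ioi huv)
  refine ⟨B, B, (fun x => hBpos x), (fun x => hBpos x), hBmono.monotoneOn _, hBmono.monotoneOn _,
    hBtop, hBtop,
    (fun u hu v hv huv => hBratio u v (mem_Ioi.1 hu) huv),
    (fun u hu v hv huv => hBratio u v (mem_Ioi.1 hu) huv),
    hBzero, hBzero, ?_, ?_⟩
  · -- littleO
    rw [isLittleO_iff]
    intro c hc
    filter_upwards [hgsq c hc, eventually_ge_atTop 1] with x hsqx hx1
    have hx0 : (0:ℝ) < x := lt_of_lt_of_le one_pos hx1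
    have hBx : 0 < B x := hBpos x
    have hBg : B x ≤ g x := min_le_right _ _
    have h1 : B x * B x ≤ c * x := by nlinarith [hg1 x]
    have h2 : B x ≤ c * x / B x := by
      rw [le_div_iff₀ hBx]
      exact h1
    rw [Real.norm_eq_abs, Real.norm_eq_abs, abs_of_nonneg (hBx.le),
      abs_of_nonneg (div_nonneg hx0.le hBx.le)]
    rw [mul_div_assoc] at h2
    exact h2
  -- main estimate
  intro ε hε
  set δ := min (1/2 : ℝ) (ε/2) with hδdef
  have hδpos : 0 < δ := lt_min (by norm_num) (by positivity)
  have hδhalf : δ ≤ 1/2 := min_le_left _ _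
  have hδeps : δ ≤ ε/2 := min_le_right _ _
  filter_upwards [smallb δ hδpos, hHpos, eventually_ge_atTop 1,
      hBzero.eventually (ge_mem_nhds (show (0:ℝ) < 1/2 by norm_num)),
      hgsq 1 one_pos] with x hsmallx hHx hx1 hBhalf hgsqx
  intro t ht htB
  have hx0 : (0:ℝ) < x := lt_of_lt_of_le one_pos hx1
  have hBx : 0 < B x := hBpos x
  have hBhalf' : B x ≤ x/2 := by
    have h1 : B x ≤ 1/2 * x := by
      have := (div_le_iff₀ hx0).1 hBhalf
      linarith
    linarith
  have hsq : B x * B x ≤ x := by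
    have h1 : B x ≤ g x := min_le_right _ _
    nlinarith [hgsqx, hBx.le, hg1 x]
  have hBleague : B x ≤ x / B x := by
    rw [le_div_iff₀ hBx]
    exact hsq
  set s := x - t with hsdef
  have hs0 : 0 < s := by
    have h1 : t ≤ x/2 := le_trans htB hBhalf'
    rw [hsdef]; linarith
  have hsx : s ≤ x := by rw [hsdef]; linarith
  set A1 := ∫⁻ y in Ioc (0:ℝ) (B x), ρ (Ioi (s/y)) ∂ν with hA1
  set M := ∫⁻ y in Ioc (B x) (x / B x), ρ (Ioi (s/y)) ∂ν with hM
  set A3 := ∫⁻ y in Ioi (x / B x), ρ (Ioi (s/y)) ∂ν with hA3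
  have hid : μ {ω | s < X ω * Y ω} = ∫⁻ y in Ioi (0:ℝ), ρ (Ioi (s/y)) ∂ν := by
    rw [hρ, hν]
    exact aux_prodtail μ X Y hXm hYm hXnn hindep hs0
  have hsplit : (∫⁻ y in Ioi (0:ℝ), ρ (Ioi (s/y)) ∂ν) = A1 + (M + A3) := by
    have e1 : Ioi (0:ℝ) = Ioc 0 (B x) ∪ Ioi (B x) := (Ioc_union_Ioi_eq_Ioi hBx.le).symm
    have e2 : Ioi (B x) = Ioc (B x) (x/B x) ∪ Ioi (x/B x) := (Ioc_union_Ioi_eq_Ioi hBleague).symm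
    rw [e1, lintegral_union measurableSet_Ioi Ioc_disjoint_Ioi_same,
      e2, lintegral_union measurableSet_Ioi Ioc_disjoint_Ioi_same]
  have hbBx : B x ≤ b x := min_le_left _ _
  have hxb : x / b x ≤ x / B x := div_le_div_of_nonneg_left hx0.le hBx hbBx
  have hA1le : A1 ≤ ρ (Ioi (x / b x - 1)) := by
    have hpt : ∀ y ∈ Ioc (0:ℝ) (B x), ρ (Ioi (s/y)) ≤ ρ (Ioi (x / b x - 1)) := by
      intro y hy
      obtain ⟨hy0, hyB⟩ := hy
      apply measure_mono
      apply Ioi_subset_Ioi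
      have h1 : s / B x ≤ s / y := div_le_div_of_nonneg_left hs0.le hy0 hyB
      have h2 : (x - B x) / B x ≤ s / B x :=
        div_le_div_of_nonneg_right (by rw [hsdef]; linarith) hBx.le
      have h3 : (x - B x)/B x = x / B x - 1 := by field_simp
      linarith
    calc A1 ≤ ∫⁻ y in Ioc (0:ℝ) (B x), ρ (Ioi (x / b x - 1)) ∂ν :=
        setLIntegral_mono measurable_const hpt
      _ = ρ (Ioi (x / b x - 1)) * ν (Ioc 0 (B x)) := setLIntegral_const _ _
      _ ≤ ρ (Ioi (x / b x - 1)) * 1 := mul_le_mul_right prob_le_one _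
      _ = ρ (Ioi (x / b x - 1)) := mul_one _
  have hA3le : A3 ≤ ν (Ioi (x / b x)) := by
    calc A3 ≤ ∫⁻ _y in Ioi (x / B x), 1 ∂ν :=
        setLIntegral_mono measurable_const (fun y _ => prob_le_one)
      _ = 1 * ν (Ioi (x / B x)) := setLIntegral_const _ _
      _ = ν (Ioi (x / B x)) := one_mul _
      _ ≤ ν (Ioi (x / b x)) := measure_mono (Ioi_subset_Ioi hxb)
  have hA1ne : A1 ≠ ⊤ := ne_top_of_le_ne_top (measure_ne_top ρ _) hA1le
  have hA3ne : A3 ≠ ⊤ := ne_top_of_le_ne_top (measure_ne_top ν _) hA3le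
  have hMne : M ≠ ⊤ := by
    have : M ≤ 1 := by
      calc M ≤ ∫⁻ _y in Ioc (B x) (x / B x), 1 ∂ν :=
          setLIntegral_mono measurable_const (fun y _ => prob_le_one)
        _ = 1 * ν (Ioc (B x) (x / B x)) := setLIntegral_const _ _
        _ ≤ 1 * 1 := mul_le_mul_right prob_le_one _
        _ = 1 := one_mul _
    exact ne_top_of_le_ne_top (by simp) this
  have hHs : Hb s = A1.toReal + (M.toReal + A3.toReal) := by
    have h0 : μ {ω | s < X ω * Y ω} = A1 + (M + A3) := hid.trans hsplit
    rw [hHb]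
    simp only [rvTail]
    rw [show {ω | s < X ω * Y ω} = {ω | s < (fun ω => X ω * Y ω) ω} from rfl] at h0
    rw [h0, ENNReal.toReal_add hA1ne (ENNReal.add_ne_top.2 ⟨hMne, hA3ne⟩),
      ENNReal.toReal_add hMne hA3ne]
  have hDeq : (∫ y in Ioc (B x) (x / B x), Fb (s/y) ∂ν) = M.toReal := by
    simp only [hFeq]
    rw [hM]
    apply integral_toReal
    · exact (hmeas0.comp (measurable_const.div measurable_id)).aemeasurable
    · exact ae_of_all _ (fun y => measure_lt_top ρ _)
  have hA1r : A1.toReal ≤ Fb (x / b x - 1) := by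
    rw [hFeq]
    exact ENNReal.toReal_mono (measure_ne_top ρ _) hA1le
  have hA3r : A3.toReal ≤ Gb (x / b x) := by
    rw [hGeq]
    exact ENNReal.toReal_mono (measure_ne_top ν _) hA3le
  have hHmono : Hb x ≤ Hb s := by
    rw [hHb]
    simp only [rvTail]
    exact ENNReal.toReal_mono (measure_ne_top μ _)
      (measure_mono (fun ω hω => lt_of_le_of_lt hsx hω))
  have hσ : A1.toReal + A3.toReal ≤ δ * Hb x := le_trans (add_le_add hA1r hA3r) hsmallx
  have hσnn : (0:ℝ) ≤ A1.toReal + A3.toReal :=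
    add_nonneg ENNReal.toReal_nonneg ENNReal.toReal_nonneg
  have hDlb : (1 - δ) * Hb x ≤ M.toReal := by
    have e : (1-δ) * Hb x = Hb x - δ * Hb x := by ring
    rw [e]
    linarith [hHs, hHmono, hσ]
  have hDpos : 0 < M.toReal :=
    lt_of_lt_of_le (mul_pos (by linarith : (0:ℝ) < 1 - δ) hHx) hDlb
  rw [hDeq]
  have habs : Hb s / M.toReal - 1 = (A1.toReal + A3.toReal) / M.toReal := by
    rw [hHs]
    field_simp
    ring
  rw [habs, abs_of_nonneg (div_nonneg hσnn hDpos.le), div_le_iff₀ hDpos]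
  have hcoef : δ ≤ ε * (1-δ) := by nlinarith [hδeps, hδhalf, hε.le]
  have h10 : δ * Hb x ≤ ε * ((1-δ) * Hb x) := by
    rw [← mul_assoc]
    exact mul_le_mul_of_nonneg_right hcoef (hHnn x)
  calc A1.toReal + A3.toReal ≤ δ * Hb x := hσ
    _ ≤ ε * ((1-δ) * Hb x) := h10
    _ ≤ ε * M.toReal := mul_le_mul_of_nonneg_left hDlb hε.le
end
end

section
/- Let γ≥0, let F₀ be a continuous distribution supported on [0,∞) belonging to the class ℒ(γ), and let {xᵢ},{yᵢ} be sequences with 0<xᵢ<yᵢ<x_{i+1}, xᵢ→∞, F̄₀(xᵢ)/F̄₀(yᵢ)→a for some constant a>1, and x_{i+1}−yᵢ ≥ xᵢ−y_{i−1} for all i≥1. Define the distribution F by F̄(x)=F̄₀(x) for x<x₁ and, for each i≥1, F̄(x)=F̄₀(xᵢ) for x∈[xᵢ,yᵢ) and F̄(x)=F̄₀(x) for x∈[yᵢ,x_{i+1}). Then: (a) F̄(x)≍F̄₀(x), i.e., the ratio F̄(x)/F̄₀(x) is bounded away from 0 and ∞ as x→∞; (b) F belongs to the generalized long-tailed class 𝒪ℒ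 but to no class ℒ(β) with β≥0; (c) C^*(F,0)=a and C_*(F,0)=1. -/
open MeasureTheory ProbabilityTheory Filter Topology Asymptotics Set

noncomputable section

namespace Stmt15Aux

open Classical in
/-- The "effective point": `xs i` if `z` lies in the plateau `[xs i, ys i)`, else `z`. -/
def effPt (xs ys : ℕ → ℝ) (z : ℝ) : ℝ :=
  if h : ∃ i, xs i ≤ z ∧ z < ys i then xs h.choose else z

open Classical in
lemma effPt_le (xs ys : ℕ → ℝ) (z : ℝ) : effPt xs ys z ≤ z := by
  unfold effPt
  split_ifs with h
  · exact h.choose_spec.1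
  · exact le_refl z

lemma effPt_of_mem {xs ys : ℕ → ℝ} (hxsm : StrictMono xs)
    (hyx : ∀ i, ys i < xs (i + 1)) {i : ℕ} {z : ℝ}
    (h1 : xs i ≤ z) (h2 : z < ys i) : effPt xs ys z = xs i := by
  classical
  have h : ∃ j, xs j ≤ z ∧ z < ys j := ⟨i, h1, h2⟩
  unfold effPt
  rw [dif_pos h]
  obtain ⟨hj1, hj2⟩ := h.choose_spec
  congr 1
  by_contra hne
  rcases lt_or_gt_of_ne hne with hlt | hlt
  · have hm : xs (h.choose + 1) ≤ xs i := hxsm.monotone (by omega)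
    linarith [hyx h.choose]
  · have hm : xs (i + 1) ≤ xs h.choose := hxsm.monotone (by omega)
    linarith [hyx i]

lemma effPt_of_not_mem {xs ys : ℕ → ℝ} {z : ℝ}
    (h : ¬ ∃ i, xs i ≤ z ∧ z < ys i) : effPt xs ys z = z := by
  unfold effPt
  rw [dif_neg h]

lemma effPt_mono {xs ys : ℕ → ℝ} (hxsm : StrictMono xs)
    (hyx : ∀ i, ys i < xs (i + 1)) : Monotone (effPt xs ys) := by
  intro u v huv
  by_cases hv : ∃ i, xs i ≤ v ∧ v < ys i
  · obtain ⟨i, hi1, hi2⟩ := hv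
    rw [effPt_of_mem hxsm hyx hi1 hi2]
    by_cases hu : ∃ j, xs j ≤ u ∧ u < ys j
    · obtain ⟨j, hj1, hj2⟩ := hu
      rw [effPt_of_mem hxsm hyx hj1 hj2]
      apply hxsm.monotone
      by_contra hji
      push_neg at hji
      have hm : xs (i + 1) ≤ xs j := hxsm.monotone (by omega)
      linarith [hyx i]
    · rw [effPt_of_not_mem hu]
      by_contra hlt
      push_neg at hlt
      exact hu ⟨i, hlt.le, lt_of_le_of_lt huv hi2⟩
  · rw [effPt_of_not_mem hv]
    exact le_trans (effPt_le xs ys u) huv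

end Stmt15Aux

set_option maxHeartbeats 1000000 in
/-- let `F₀ ∈ ℒ(γ)` be a continuous distribution on `[0,∞)` and let `F` be
obtained from `F₀` by freezing its tail on the intervals `[xᵢ, yᵢ)`, where
`F̄₀(xᵢ)/F̄₀(yᵢ) → a > 1` and the gaps `x_{i+1} − yᵢ` are nondecreasing. Then
(a) `F̄ ≍ F̄₀`; (b) `F ∈ 𝒪ℒ` but `F ∉ ℒ(β)` for every `β ≥ 0`;
(c) `C^*(F,0) = a` and `C_*(F,0) = 1`. -/
theorem stmt_15 (γ : ℝ) (hγ : 0 ≤ γ) (T₀ : ℝ → ℝ)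
    (hcont : Continuous T₀) (hanti : Antitone T₀)
    (hneg : ∀ x < (0:ℝ), T₀ x = 1) (hlim0 : Tendsto T₀ atTop (𝓝 0))
    (hLγ : IsLgamma γ T₀)
    (xs ys : ℕ → ℝ) (a : ℝ) (ha : 1 < a)
    (hxpos : ∀ i, 0 < xs i)
    (hxy : ∀ i, xs i < ys i) (hyx : ∀ i, ys i < xs (i + 1))
    (hxtop : Tendsto xs atTop atTop)
    (hratio : Tendsto (fun i => T₀ (xs i) / T₀ (ys i)) atTop (𝓝 a))
    (hgap : ∀ i, xs (i + 1) - ys i ≤ xs (i + 2) - ys (i + 1))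
    (T : ℝ → ℝ)
    (hT1 : ∀ x, x < xs 0 → T x = T₀ x)
    (hT2 : ∀ i, ∀ x, xs i ≤ x → x < ys i → T x = T₀ (xs i))
    (hT3 : ∀ i, ∀ x, ys i ≤ x → x < xs (i + 1) → T x = T₀ x) :
    (T =Θ[atTop] T₀) ∧
    (IsOL T ∧ ∀ β ≥ (0:ℝ), ¬ IsLgamma β T) ∧
    (Tendsto (fun t => Cstar T t) (𝓝[>] (0:ℝ)) (𝓝 a) ∧
      Tendsto (fun t => Cflat T t) (𝓝[>] (0:ℝ)) (𝓝 1)) := by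
  classical
  have hT0pos : ∀ x, 0 < T₀ x := hLγ.1
  have hxsm : StrictMono xs := strictMono_nat_of_lt_succ fun i => (hxy i).trans (hyx i)
  have hystop : Tendsto ys atTop atTop := tendsto_atTop_mono (fun i => (hxy i).le) hxtop
  -- every `z ≥ xs 0` is in some window `[xs i, xs (i+1))`
  have hcover : ∀ z : ℝ, xs 0 ≤ z → ∃ i, xs i ≤ z ∧ z < xs (i + 1) := by
    intro z hz
    have h1 : ∃ n, z < xs n := (hxtop.eventually (eventually_gt_atTop z)).exists
    have hn := Nat.find_spec h1
    have hn0 : Nat.find h1 ≠ 0 := by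
      intro h0
      rw [h0] at hn
      linarith
    refine ⟨Nat.find h1 - 1, ?_, ?_⟩
    · have h2 := Nat.find_min h1 (Nat.pred_lt hn0)
      push_neg at h2
      exact h2
    · have he : Nat.find h1 - 1 + 1 = Nat.find h1 := by omega
      rw [he]
      exact hn
  -- T in terms of effPt
  have hTeq : ∀ z, T z = T₀ (Stmt15Aux.effPt xs ys z) := by
    intro z
    by_cases hz : z < xs 0
    · have hnp : ¬ ∃ i, xs i ≤ z ∧ z < ys i := by
        rintro ⟨i, hi1, -⟩
        exact absurd (le_trans (hxsm.monotone (Nat.zero_le i)) hi1) (not_le.2 hz)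
      rw [Stmt15Aux.effPt_of_not_mem hnp, hT1 z hz]
    · push_neg at hz
      obtain ⟨i, hi1, hi2⟩ := hcover z hz
      by_cases hp : z < ys i
      · rw [Stmt15Aux.effPt_of_mem hxsm hyx hi1 hp, hT2 i z hi1 hp]
      · push_neg at hp
        have hnp : ¬ ∃ j, xs j ≤ z ∧ z < ys j := by
          rintro ⟨j, hj1, hj2⟩
          rcases lt_trichotomy j i with h | h | h
          · have hm : xs (j + 1) ≤ xs i := hxsm.monotone (by omega)
            linarith [hyx j]
          · subst h; linarith
          · have hm : xs (i + 1) ≤ xs j := hxsm.monotone (by omega)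
            linarith
        rw [Stmt15Aux.effPt_of_not_mem hnp, hT3 i z hp hi2]
  have hTpos : ∀ z, 0 < T z := fun z => by rw [hTeq z]; exact hT0pos _
  have hT_ge : ∀ z, T₀ z ≤ T z := fun z => by
    rw [hTeq z]; exact hanti (Stmt15Aux.effPt_le xs ys z)
  have hTanti : Antitone T := fun u v huv => by
    rw [hTeq u, hTeq v]
    exact hanti (Stmt15Aux.effPt_mono hxsm hyx huv)
  -- a length scale δ with exp (γδ) < a
  have hlog : 0 < Real.log a := Real.log_pos ha
  set δ : ℝ := min 1 (Real.log a / (γ + 1)) with hδdef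
  have hδpos : 0 < δ := lt_min one_pos (div_pos hlog (by linarith))
  have hγδ : γ * δ < Real.log a := by
    have h1 : δ * (γ + 1) ≤ Real.log a := by
      rw [← le_div_iff₀ (by linarith : (0:ℝ) < γ + 1)]
      exact min_le_right _ _
    nlinarith
  have hexpδ : Real.exp (γ * δ) < a := by
    calc Real.exp (γ * δ) < Real.exp (Real.log a) := Real.exp_lt_exp.2 hγδ
      _ = a := Real.exp_log (by linarith)
  -- plateau lengths are eventually > δ
  have hlen : ∀ᶠ i in atTop, δ < ys i - xs i := by
    set m : ℝ := (Real.exp (γ * δ) + a) / 2 with hm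
    have hm1 : Real.exp (γ * δ) < m := by rw [hm]; linarith
    have hm2 : m < a := by rw [hm]; linarith
    have h1 : Tendsto (fun i => T₀ (ys i - δ) / T₀ (ys i)) atTop (𝓝 (Real.exp (γ * δ))) :=
      (hLγ.2 δ).comp hystop
    filter_upwards [h1.eventually_lt_const hm1, hratio.eventually_const_lt hm2] with i hi1 hi2
    by_contra hc
    push_neg at hc
    have h3 : T₀ (xs i) ≤ T₀ (ys i - δ) := hanti (by linarith)
    have h4 : T₀ (xs i) / T₀ (ys i) ≤ T₀ (ys i - δ) / T₀ (ys i) :=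
      (div_le_div_iff_of_pos_right (hT0pos (ys i))).2 h3
    linarith
  -- gaps are bounded below
  have hgap0 : ∀ i, xs 1 - ys 0 ≤ xs (i + 1) - ys i := by
    intro i
    induction i with
    | zero => exact le_refl _
    | succ n ih => exact le_trans ih (hgap n)
  set g0 : ℝ := xs 1 - ys 0 with hg0def
  have hg0pos : 0 < g0 := by have := hyx 0; rw [hg0def]; linarith
  set t0 : ℝ := min δ g0 with ht0def
  have ht0pos : 0 < t0 := lt_min hδpos hg0pos
  -- the eventual upper envelope T ≤ (a+ε) T₀
  have hub : ∀ ε : ℝ, 0 < ε → ∃ X : ℝ, ∀ z, X ≤ z → T z ≤ (a + ε) * T₀ z := by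
    intro ε hε
    obtain ⟨N, hN⟩ := eventually_atTop.1 (hratio.eventually_lt_const (lt_add_of_pos_right a hε))
    refine ⟨xs N, fun z hz => ?_⟩
    rw [hTeq z]
    by_cases hp : ∃ i, xs i ≤ z ∧ z < ys i
    · obtain ⟨i, hi1, hi2⟩ := hp
      rw [Stmt15Aux.effPt_of_mem hxsm hyx hi1 hi2]
      have hiN : N ≤ i := by
        by_contra hc
        push_neg at hc
        have hm : xs (i + 1) ≤ xs N := hxsm.monotone (by omega)
        linarith [hyx i]
      have h1 : T₀ (xs i) / T₀ (ys i) < a + ε := hN i hiN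
      have h2 : T₀ (xs i) < (a + ε) * T₀ (ys i) := by
        rwa [div_lt_iff₀ (hT0pos (ys i))] at h1
      have h3 : T₀ (ys i) ≤ T₀ z := hanti hi2.le
      calc T₀ (xs i) ≤ (a + ε) * T₀ (ys i) := h2.le
        _ ≤ (a + ε) * T₀ z := mul_le_mul_of_nonneg_left h3 (by linarith)
    · rw [Stmt15Aux.effPt_of_not_mem hp]
      nlinarith [hT0pos z, mul_pos (show (0:ℝ) < a + ε - 1 by linarith) (hT0pos z)]
  -- part (a)
  have hBigO1 : T =O[atTop] T₀ := by
    obtain ⟨X, hX⟩ := hub 1 one_pos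
    rw [Asymptotics.isBigO_iff]
    refine ⟨a + 1, ?_⟩
    filter_upwards [eventually_ge_atTop X] with x hx
    rw [Real.norm_eq_abs, Real.norm_eq_abs, abs_of_pos (hTpos x), abs_of_pos (hT0pos x)]
    exact hX x hx
  have hBigO2 : T₀ =O[atTop] T := by
    rw [Asymptotics.isBigO_iff]
    refine ⟨1, Eventually.of_forall fun x => ?_⟩
    rw [Real.norm_eq_abs, Real.norm_eq_abs, abs_of_pos (hTpos x), abs_of_pos (hT0pos x), one_mul]
    exact hT_ge x
  -- OL
  have hOL : IsOL T := by
    refine ⟨hTpos, fun t ht => ?_⟩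
    obtain ⟨X, hX⟩ := hub 1 one_pos
    apply isBoundedUnder_of_eventually_le (a := (a + 1) * (Real.exp (γ * t) + 1))
    filter_upwards [eventually_ge_atTop (X + t),
      (hLγ.2 t).eventually_lt_const (lt_add_one _)] with x hx hrx
    have h1 : T (x - t) ≤ (a + 1) * T₀ (x - t) := hX _ (by linarith)
    have h2 : T (x - t) / T x ≤ (a + 1) * T₀ (x - t) / T₀ x :=
      div_le_div₀ (mul_pos (by linarith : (0:ℝ) < a + 1) (hT0pos (x - t))).le
        h1 (hT0pos x) (hT_ge x)
    calc T (x - t) / T x ≤ (a + 1) * T₀ (x - t) / T₀ x := h2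
      _ = (a + 1) * (T₀ (x - t) / T₀ x) := by ring
      _ ≤ (a + 1) * (Real.exp (γ * t) + 1) := mul_le_mul_of_nonneg_left hrx.le (by linarith)
  -- subsequence along plateaus: ratio = 1
  have hsub1 : ∀ t : ℝ, 0 < t → t ≤ δ →
      ∀ᶠ i in atTop, T (xs i + t - t) / T (xs i + t) = 1 := by
    intro t ht htδ
    filter_upwards [hlen] with i hi
    have h1 : xs i + t - t = xs i := by ring
    rw [h1, hT2 i (xs i) le_rfl (hxy i), hT2 i (xs i + t) (by linarith) (by linarith)]
    exact div_self (ne_of_gt (hT0pos _))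
  -- subsequence across the jump at ys i: ratio → a exp(γ t/2)
  have hsub2 : ∀ t : ℝ, 0 < t → t ≤ δ → t ≤ g0 →
      Tendsto (fun i => T (ys i + t / 2 - t) / T (ys i + t / 2)) atTop
        (𝓝 (a * Real.exp (γ * (t / 2)))) := by
    intro t ht htδ htg
    have hy2 : Tendsto (fun i => ys i + t / 2) atTop atTop :=
      tendsto_atTop_add_const_right _ _ hystop
    have h2 : Tendsto (fun i => T₀ (ys i) / T₀ (ys i + t / 2)) atTop
        (𝓝 (Real.exp (γ * (t / 2)))) := by
      have h := (hLγ.2 (t / 2)).comp hy2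
      refine h.congr fun i => ?_
      simp only [Function.comp]
      congr 2
      ring
    have hmul := hratio.mul h2
    refine hmul.congr' ?_
    filter_upwards [hlen] with i hi
    have e1 : T (ys i + t / 2 - t) = T₀ (xs i) := by
      have h3 : ys i + t / 2 - t = ys i - t / 2 := by ring
      rw [h3]
      exact hT2 i _ (by linarith) (by linarith)
    have e2 : T (ys i + t / 2) = T₀ (ys i + t / 2) := by
      refine hT3 i _ (by linarith) ?_
      have := hgap0 i
      linarith
    rw [e1, e2]
    have hne1 : T₀ (ys i) ≠ 0 := (hT0pos _).ne'
    have hne2 : T₀ (ys i + t / 2) ≠ 0 := (hT0pos _).ne'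
    field_simp
  -- part (b2)
  have hnotL : ∀ β ≥ (0:ℝ), ¬ IsLgamma β T := by
    intro β hβ hL
    have ht : 0 < t0 := ht0pos
    have hu : Tendsto (fun i => xs i + t0) atTop atTop :=
      tendsto_atTop_add_const_right _ _ hxtop
    have l1 : Tendsto (fun i => T (xs i + t0 - t0) / T (xs i + t0)) atTop
        (𝓝 (Real.exp (β * t0))) := (hL.2 t0).comp hu
    have l2 : Tendsto (fun i => T (xs i + t0 - t0) / T (xs i + t0)) atTop (𝓝 1) :=
      tendsto_const_nhds.congr' ((hsub1 t0 ht (min_le_left _ _)).mono fun i hi => hi.symm)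
    have hβt : Real.exp (β * t0) = 1 := tendsto_nhds_unique l1 l2
    have hβ0 : β = 0 := by
      rcases mul_eq_zero.1 ((Real.exp_eq_one_iff _).1 hβt) with h | h
      · exact h
      · exact absurd h (ne_of_gt ht)
    have hv : Tendsto (fun i => ys i + t0 / 2) atTop atTop :=
      tendsto_atTop_add_const_right _ _ hystop
    have l3 : Tendsto (fun i => T (ys i + t0 / 2 - t0) / T (ys i + t0 / 2)) atTop
        (𝓝 (Real.exp (β * t0))) := (hL.2 t0).comp hv
    have l4 := hsub2 t0 ht (min_le_left _ _) (min_le_right _ _)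
    have heq : Real.exp (β * t0) = a * Real.exp (γ * (t0 / 2)) := tendsto_nhds_unique l3 l4
    rw [hβ0, zero_mul, Real.exp_zero] at heq
    have h5 : 1 ≤ Real.exp (γ * (t0 / 2)) := Real.one_le_exp (mul_nonneg hγ (by linarith))
    have h6 : a * 1 ≤ a * Real.exp (γ * (t0 / 2)) := mul_le_mul_of_nonneg_left h5 (by linarith)
    linarith
  -- ratio is always ≥ 1
  have hfge1 : ∀ t : ℝ, 0 < t → ∀ x : ℝ, 1 ≤ T (x - t) / T x := by
    intro t ht x
    rw [le_div_iff₀ (hTpos x), one_mul]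
    exact hTanti (by linarith)
  -- Cflat = 1 for small t
  have hCflat : ∀ t : ℝ, 0 < t → t < t0 → Cflat T t = 1 := by
    intro t ht htt0
    have htδ : t ≤ δ := le_of_lt (lt_of_lt_of_le htt0 (min_le_left _ _))
    have hbd : IsBoundedUnder (· ≥ ·) atTop fun x => T (x - t) / T x :=
      isBoundedUnder_of_eventually_ge (Eventually.of_forall fun x => hfge1 t ht x)
    have hfreq : ∃ᶠ x in atTop, T (x - t) / T x ≤ 1 := by
      have hu : Tendsto (fun i => xs i + t) atTop atTop :=
        tendsto_atTop_add_const_right _ _ hxtop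
      exact hu.frequently (((hsub1 t ht htδ).mono fun i hi => hi.le).frequently)
    simp only [Cflat]
    refine le_antisymm (liminf_le_of_frequently_le hfreq hbd) ?_
    exact le_liminf_of_le ((hOL.2 t ht).isCoboundedUnder_ge)
      (Eventually.of_forall (hfge1 t ht))
  -- Cstar upper bound
  have hCub : ∀ t : ℝ, 0 < t → Cstar T t ≤ a * Real.exp (γ * t) := by
    intro t ht
    have key : ∀ ε : ℝ, 0 < ε → Cstar T t ≤ (a + ε) * Real.exp (γ * t) := by
      intro ε hε
      obtain ⟨X, hX⟩ := hub ε hε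
      have hle : (fun x => T (x - t) / T x) ≤ᶠ[atTop]
          fun x => (a + ε) * (T₀ (x - t) / T₀ x) := by
        filter_upwards [eventually_ge_atTop (X + t)] with x hx
        have h1 : T (x - t) ≤ (a + ε) * T₀ (x - t) := hX _ (by linarith)
        have h2 : T (x - t) / T x ≤ (a + ε) * T₀ (x - t) / T₀ x :=
          div_le_div₀ (mul_pos (by linarith : (0:ℝ) < a + ε) (hT0pos (x - t))).le
            h1 (hT0pos x) (hT_ge x)
        calc T (x - t) / T x ≤ (a + ε) * T₀ (x - t) / T₀ x := h2
          _ = (a + ε) * (T₀ (x - t) / T₀ x) := by ring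
      have hg : Tendsto (fun x => (a + ε) * (T₀ (x - t) / T₀ x)) atTop
          (𝓝 ((a + ε) * Real.exp (γ * t))) := (hLγ.2 t).const_mul _
      have hco : IsCoboundedUnder (· ≤ ·) atTop fun x => T (x - t) / T x :=
        (isBoundedUnder_of_eventually_ge
          (Eventually.of_forall fun x => hfge1 t ht x)).isCoboundedUnder_le
      calc Cstar T t ≤ limsup (fun x => (a + ε) * (T₀ (x - t) / T₀ x)) atTop :=
            limsup_le_limsup hle hco hg.isBoundedUnder_le
        _ = (a + ε) * Real.exp (γ * t) := hg.limsup_eq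
    by_contra hcon
    push_neg at hcon
    have hEpos : 0 < Real.exp (γ * t) := Real.exp_pos _
    have hdpos : 0 < Cstar T t - a * Real.exp (γ * t) := by linarith
    have h2 := key ((Cstar T t - a * Real.exp (γ * t)) / (2 * Real.exp (γ * t)))
      (by positivity)
    have h3 : (a + (Cstar T t - a * Real.exp (γ * t)) / (2 * Real.exp (γ * t))) *
        Real.exp (γ * t)
        = a * Real.exp (γ * t) + (Cstar T t - a * Real.exp (γ * t)) / 2 := by
      field_simp
    rw [h3] at h2
    linarith
  -- Cstar lower bound
  have hClb : ∀ t : ℝ, 0 < t → t < t0 → a ≤ Cstar T t := by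
    intro t ht htt0
    have htδ : t ≤ δ := le_of_lt (lt_of_lt_of_le htt0 (min_le_left _ _))
    have htg : t ≤ g0 := le_of_lt (lt_of_lt_of_le htt0 (min_le_right _ _))
    have hbd : IsBoundedUnder (· ≤ ·) atTop fun x => T (x - t) / T x := hOL.2 t ht
    have key : ∀ ε : ℝ, 0 < ε → a - ε ≤ Cstar T t := by
      intro ε hε
      have l4 := hsub2 t ht htδ htg
      have h5 : 1 ≤ Real.exp (γ * (t / 2)) := Real.one_le_exp (mul_nonneg hγ (by linarith))
      have h6 : a * 1 ≤ a * Real.exp (γ * (t / 2)) := mul_le_mul_of_nonneg_left h5 (by linarith)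
      have hlim : a - ε < a * Real.exp (γ * (t / 2)) := by linarith
      have hfreq : ∃ᶠ x in atTop, a - ε ≤ T (x - t) / T x := by
        have hv : Tendsto (fun i => ys i + t / 2) atTop atTop :=
          tendsto_atTop_add_const_right _ _ hystop
        exact hv.frequently (((l4.eventually_const_lt hlim).mono fun i hi => hi.le).frequently)
      exact le_limsup_of_frequently_le hfreq hbd
    by_contra hcon
    push_neg at hcon
    have h7 := key ((a - Cstar T t) / 2) (by linarith)
    linarith
  refine ⟨⟨hBigO1, hBigO2⟩, ⟨hOL, hnotL⟩, ?_, ?_⟩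
  · -- Cstar → a
    have hmem : Ioo (0:ℝ) t0 ∈ 𝓝[>] (0:ℝ) := Ioo_mem_nhdsGT_of_mem ⟨le_refl 0, ht0pos⟩
    have hh : Tendsto (fun t : ℝ => a * Real.exp (γ * t)) (𝓝[>] (0:ℝ)) (𝓝 a) := by
      have hc : Continuous fun t : ℝ => a * Real.exp (γ * t) :=
        continuous_const.mul (Real.continuous_exp.comp (continuous_const.mul continuous_id))
      have h0 := hc.tendsto 0
      simp only [mul_zero, Real.exp_zero, mul_one] at h0
      exact h0.mono_left nhdsWithin_le_nhds
    refine tendsto_of_tendsto_of_tendsto_of_le_of_le' tendsto_const_nhds hh ?_ ?_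
    · filter_upwards [hmem] with t htm
      exact hClb t htm.1 htm.2
    · filter_upwards [hmem] with t htm
      exact hCub t htm.1
  · -- Cflat → 1
    have hmem : Ioo (0:ℝ) t0 ∈ 𝓝[>] (0:ℝ) := Ioo_mem_nhdsGT_of_mem ⟨le_refl 0, ht0pos⟩
    have heq : (fun _ : ℝ => (1:ℝ)) =ᶠ[𝓝[>] (0:ℝ)] fun t => Cflat T t := by
      filter_upwards [hmem] with t htm
      exact (hCflat t htm.1 htm.2).symm
    exact Tendsto.congr' heq tendsto_const_nhds
end
end
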